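/- arXiv:2210.04762 — 4 statements merged into one kernel-verified Lean document; each statement's English description precedes it below -/
import Mathlib

section
/- Let λ ∈ [P_{n+l−1}]_{≥l} and T ∈ Tab(l,λ). For every point a ∈ K^n such that Λ_l(a) is not ⊴ λ in the dominance order, the Specht polynomial satisfies f_T(a) = 0. -/
/-!
If `f_T(a) ≠ 0`, the values of `a` along each column of `T` are pairwise distinct. The multiset
of coordinates of `a_{(l)}` is the union over the columns of `T` of the values of `a` on that
column, so any `k` distinct values occupy at most `min (λ'_j, k)` boxes of column `j`, hence at
most `λ_1 + ⋯ + λ_k` boxes altogether. The `i` largest multiplicities of `a_{(l)}` are the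
multiplicities of some `k ≤ i` values, so `Λ_l(a) ⊴ λ`.
-/

open MvPolynomial

namespace SpechtLL

/-- A partition of `N`: a non-increasing list of positive integers summing to `N`. -/
structure Partition (N : ℕ) where
  parts : List ℕ
  sorted : parts.Pairwise (· ≥ ·)
  pos : ∀ p ∈ parts, 0 < p
  sum_eq : parts.sum = N

/-- `domLE ν μ` means ν ⊴ μ in the dominance order. -/
def domLE {N : ℕ} (nu mu : Partition N) : Prop :=
  ∀ i : ℕ, (nu.parts.take i).sum ≤ (mu.parts.take i).sum

/-- The first (largest) part λ₁ of a partition. -/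
def partOne {N : ℕ} (lam : Partition N) : ℕ := lam.parts.headD 0

/-- The cells (i, j) (row i, column j, 0-indexed) of the Young diagram of a partition. -/
def cells {N : ℕ} (lam : Partition N) : Finset (ℕ × ℕ) :=
  (Finset.range lam.parts.length ×ˢ Finset.range (partOne lam)).filter
    (fun c => c.2 < lam.parts.getD c.1 0)

/-- The length λ⊥ⱼ of the j-th column of the Young diagram. -/
def colLen {N : ℕ} (lam : Partition N) (j : ℕ) : ℕ :=
  lam.parts.countP (fun p => decide (j < p))

/-- The list of entries of the j-th column of a filling `T`, from top to bottom. -/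
def colList {n N : ℕ} (lam : Partition N) (T : ℕ × ℕ → Fin n) (j : ℕ) : List (Fin n) :=
  (List.range (colLen lam j)).map fun i => T (i, j)

/-- The multiset of entries: `l` copies of the special entry `sp` and each other
element of `Fin n` exactly once. -/
def fillContent (n : ℕ) (l : ℕ) (sp : Fin n) : Multiset (Fin n) :=
  Multiset.replicate (l - 1) sp + (Finset.univ : Finset (Fin n)).val

/-- `T` is a filling of the diagram of `lam` by the multiset consisting of `l` copies of `sp`
and each other element of `Fin n` once, with no two copies of `sp` in the same column. -/
def IsFilling {n N : ℕ} (l : ℕ) (sp : Fin n) (lam : Partition N) (T : ℕ × ℕ → Fin n) : Prop :=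
  (cells lam).val.map T = fillContent n l sp ∧
    ∀ j : ℕ, (colList lam T j).count sp ≤ 1

/-- Standard tableau: columns strictly increase from top to bottom and rows are
non-decreasing from left to right. -/
def IsStandard {n N : ℕ} (lam : Partition N) (T : ℕ × ℕ → Fin n) : Prop :=
  (∀ i j : ℕ, (i + 1, j) ∈ cells lam → T (i, j) < T (i + 1, j)) ∧
  (∀ i j : ℕ, (i, j + 1) ∈ cells lam → T (i, j) ≤ T (i, j + 1))

variable (K : Type*) [Field K]

/-- The difference product of a list of (indices of) variables. -/
noncomputable def deltaList {n : ℕ} : List (Fin n) → MvPolynomial (Fin n) K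
  | [] => 1
  | a :: rest => ((rest.map fun b => X a - X b).prod) * deltaList rest

/-- The Specht polynomial of a filling `T` of shape `lam`. -/
noncomputable def spechtPoly {n N : ℕ} (lam : Partition N) (T : ℕ × ℕ → Fin n) : MvPolynomial (Fin n) K :=
  ((List.range (partOne lam)).map fun j => deltaList K (colList lam T j)).prod

/-- The Specht ideal generated by all Specht polynomials of fillings of shape `lam`
(with `l` copies of the special entry `sp`). -/
noncomputable def spechtIdeal {n N : ℕ} (l : ℕ) (sp : Fin n) (lam : Partition N) :
    Ideal (MvPolynomial (Fin n) K) :=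
  Ideal.span {f | ∃ T, IsFilling l sp lam T ∧ f = spechtPoly K lam T}

/-- The lexicographic order on monomials with x₁ < x₂ < ⋯ < xₙ: the larger monomial is
decided at the highest-index variable where the exponents differ. -/
def lexLt {n : ℕ} (a b : Fin n →₀ ℕ) : Prop :=
  ∃ i : Fin n, a i < b i ∧ ∀ j : Fin n, i < j → a j = b j

/-- A monomial order: a strict linear order on exponent vectors compatible with
addition and having 0 as least element. -/
def IsMonomialOrder {n : ℕ} (lt : (Fin n →₀ ℕ) → (Fin n →₀ ℕ) → Prop) : Prop :=
  (∀ a b c, lt a b → lt b c → lt a c) ∧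
  (∀ a, ¬ lt a a) ∧
  (∀ a b, a = b ∨ lt a b ∨ lt b a) ∧
  (∀ a b c, lt a b → lt (a + c) (b + c)) ∧
  (∀ a, a ≠ 0 → lt 0 a)

/-- `d` is the exponent vector of the initial monomial of `f` with respect to the
monomial order `lt`. -/
def IsInitialFor {n : ℕ} (lt : (Fin n →₀ ℕ) → (Fin n →₀ ℕ) → Prop)
    (f : MvPolynomial (Fin n) K) (d : Fin n →₀ ℕ) : Prop :=
  d ∈ f.support ∧ ∀ e ∈ f.support, e ≠ d → lt e d

/-- `G` is a Gröbner basis of `I` w.r.t. `lt`: `G ⊆ I` and the initial monomial of every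
nonzero element of `I` is divisible by the initial monomial of some element of `G`. -/
def IsGroebnerBasisFor {n : ℕ} (lt : (Fin n →₀ ℕ) → (Fin n →₀ ℕ) → Prop)
    (G : Set (MvPolynomial (Fin n) K)) (I : Ideal (MvPolynomial (Fin n) K)) : Prop :=
  (∀ g ∈ G, g ∈ I) ∧
  ∀ f ∈ I, f ≠ 0 → ∀ d, IsInitialFor K lt f d →
    ∃ g ∈ G, ∃ e, IsInitialFor K lt g e ∧ e ≤ d

/-- The ideal of polynomials vanishing on all points satisfying `P`. -/
def vanishingIdeal (n : ℕ) (P : (Fin n → K) → Prop) : Ideal (MvPolynomial (Fin n) K) where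
  carrier := {f | ∀ a : Fin n → K, P a → MvPolynomial.eval a f = 0}
  add_mem' := by
    intro f g hf hg a ha
    simp only [Set.mem_setOf_eq] at *
    rw [map_add, hf a ha, hg a ha, add_zero]
  zero_mem' := by intro a _; simp
  smul_mem' := by
    intro c f hf a ha
    simp only [Set.mem_setOf_eq, smul_eq_mul, map_mul] at *
    rw [hf a ha, mul_zero]

/-- `mu` is the multiplicity partition of the multiset `M`: the parts of `mu` are
exactly the multiplicities of the distinct elements of `M`. -/
def IsMultPartition {M' : ℕ} [DecidableEq K] (M : Multiset K) (mu : Partition M') : Prop :=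
  (↑mu.parts : Multiset ℕ) = M.toFinset.val.map fun α => M.count α

/-- The multiset of values of the vector `a_{(l)} ∈ K^{n+l-1}` obtained from `a ∈ Kⁿ`
by repeating the first coordinate `l` times. -/
def lamL {n : ℕ} [NeZero n] (l : ℕ) (a : Fin n → K) : Multiset K :=
  Multiset.replicate (l - 1) (a 0) + (Finset.univ : Finset (Fin n)).val.map a

/-- The multiset of parts of the partition `mu + ⟨i⟩` (i is 1-indexed). -/
def addBoxMultiset {N : ℕ} (mu : Partition N) (i : ℕ) : Multiset ℕ :=
  if i ≤ mu.parts.length then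
    ((↑mu.parts : Multiset ℕ).erase (mu.parts.getD (i - 1) 0)) + {mu.parts.getD (i - 1) 0 + 1}
  else ↑mu.parts + {1}

/-- `nu = mu + ⟨i⟩`. -/
def IsAddBox {N M : ℕ} (mu : Partition N) (i : ℕ) (nu : Partition M) : Prop :=
  (↑nu.parts : Multiset ℕ) = addBoxMultiset mu i

/-- The largest element of `Fin n`. -/
def finLast (n : ℕ) [NeZero n] : Fin n := ⟨n - 1, by have := NeZero.ne n; omega⟩

/-- The number `w(T)` of squares of `T` lying above some square filled with `sp`. -/
def wval {n N : ℕ} (lam : Partition N) (sp : Fin n) (T : ℕ × ℕ → Fin n) : ℕ :=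
  ((cells lam).filter fun c =>
    ∃ i' ∈ Finset.range (colLen lam c.2), c.1 < i' ∧ T (i', c.2) = sp).card

/-- `mu = sh_{<n}(T)`: the shape obtained from `T` (of shape `lam`) by removing all
squares filled with `sp`, described via column lengths. -/
def HasShapeRemoved {n N M : ℕ} (lam : Partition N) (sp : Fin n) (T : ℕ × ℕ → Fin n)
    (mu : Partition M) : Prop :=
  ∀ j : ℕ, colLen mu j + (colList lam T j).count sp = colLen lam j

/-- Difference product of a list, omitting the factors where both indices are < m. -/
noncomputable def deltaListAvoid (m : ℕ) {n : ℕ} : List (Fin n) → MvPolynomial (Fin n) K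
  | [] => 1
  | a :: rest =>
      ((rest.filter fun b => decide (m ≤ a.val ∨ m ≤ b.val)).map fun b => X a - X b).prod *
        deltaListAvoid m rest

/-- Δ_m = Δ({1, …, m}), the difference product of the first m variables. -/
noncomputable def deltaM (n m : ℕ) : MvPolynomial (Fin n) K :=
  deltaList K ((List.finRange n).take m)

/-- `f_{m,T} = lcm(f_T, Δ_m)`: the product of `Δ_m` with all factors of the Specht
polynomial `f_T` not already occurring in `Δ_m`. -/
noncomputable def fmPoly {n N : ℕ} (m : ℕ) (lam : Partition N) (T : ℕ × ℕ → Fin n) :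
    MvPolynomial (Fin n) K :=
  deltaM K n m *
    ((List.range (partOne lam)).map fun j => deltaListAvoid K m (colList lam T j)).prod

/-- The ideal `I_{l,m,λ}` generated by the `f_{m,T}`, `T ∈ Tab(l,λ)`. -/
noncomputable def spechtIdealM {n N : ℕ} (m l : ℕ) (sp : Fin n) (lam : Partition N) :
    Ideal (MvPolynomial (Fin n) K) :=
  Ideal.span {f | ∃ T, IsFilling l sp lam T ∧ f = fmPoly K m lam T}

section AntitoneLists

variable {P : List ℕ}

lemma countP_lt_eq_zero {j : ℕ} (h : ∀ p ∈ P, p ≤ j) :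
    P.countP (fun p => decide (j < p)) = 0 :=
  List.countP_eq_zero.mpr fun p hp => by simpa using h p hp

lemma getD_le_of_forall_le {j : ℕ} (h : ∀ p ∈ P, p ≤ j) (i : ℕ) : P.getD i 0 ≤ j := by
  rw [List.getD_eq_getElem?_getD]
  cases hi : P[i]? with
  | none => simp
  | some p => exact h p (List.mem_of_getElem? hi)

lemma forall_le_of_not_lt_head {x j : ℕ} (hP : (x :: P).Pairwise (· ≥ ·)) (hjx : ¬ j < x) :
    ∀ p ∈ x :: P, p ≤ j := by
  simp only [List.mem_cons, forall_eq_or_imp]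
  exact ⟨by omega, fun p hp => (List.rel_of_pairwise_cons hP hp).trans (by omega)⟩

lemma lt_getD_iff_lt_countP (hP : P.Pairwise (· ≥ ·)) (i j : ℕ) :
    j < P.getD i 0 ↔ i < P.countP (fun p => decide (j < p)) := by
  induction P generalizing i with
  | nil => simp
  | cons x P ih =>
    by_cases hjx : j < x
    · cases i with
      | zero => simp [hjx]
      | succ i =>
        simp only [List.getD_cons_succ, List.countP_cons, ih hP.of_cons i]
        simp [hjx]
    · have hle := forall_le_of_not_lt_head hP hjx
      simp only [countP_lt_eq_zero hle, Nat.not_lt_zero, iff_false, not_lt]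
      exact getD_le_of_forall_le hle i

lemma countP_lt_take (hP : P.Pairwise (· ≥ ·)) (k j : ℕ) :
    (P.take k).countP (fun p => decide (j < p)) = min (P.countP (fun p => decide (j < p))) k := by
  induction P generalizing k with
  | nil => simp
  | cons x P ih =>
    cases k with
    | zero => simp
    | succ k =>
      by_cases hjx : j < x
      · simp only [List.take_succ_cons, List.countP_cons, ih hP.of_cons k]
        simp [hjx]
      · have hle := forall_le_of_not_lt_head hP hjx
        rw [countP_lt_eq_zero hle, countP_lt_eq_zero fun p hp => hle p (List.take_subset _ _ hp)]
        simp

lemma sum_range_countP_lt {m : ℕ} (h : ∀ p ∈ P, p ≤ m) :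
    ∑ j ∈ Finset.range m, P.countP (fun p => decide (j < p)) = P.sum := by
  induction P with
  | nil => simp
  | cons x P ih =>
    simp only [List.mem_cons, forall_eq_or_imp] at h
    simp only [List.countP_cons, List.sum_cons, Finset.sum_add_distrib, ih h.2, decide_eq_true_eq]
    have hx : {j ∈ Finset.range m | j < x} = Finset.range x := by
      ext j
      simp only [Finset.mem_filter, Finset.mem_range]
      omega
    rw [Finset.sum_boole, hx, Finset.card_range, Nat.cast_id, add_comm]

end AntitoneLists

section YoungDiagram

variable {N : ℕ} (lam : Partition N)

lemma le_partOne_of_mem {p : ℕ} (hp : p ∈ lam.parts) : p ≤ partOne lam := by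
  unfold partOne
  cases h : lam.parts with
  | nil => simp [h] at hp
  | cons x P =>
    have hs := lam.sorted
    rw [h] at hs hp
    rcases List.mem_cons.mp hp with rfl | hp
    · rfl
    · exact List.rel_of_pairwise_cons hs hp

lemma mem_cells {i j : ℕ} : (i, j) ∈ cells lam ↔ j < partOne lam ∧ i < colLen lam j := by
  simp only [cells, colLen, Finset.mem_filter, Finset.mem_product, Finset.mem_range,
    lt_getD_iff_lt_countP lam.sorted]
  constructor
  · rintro ⟨⟨_, hj⟩, hij⟩
    exact ⟨hj, hij⟩
  · rintro ⟨hj, hij⟩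
    exact ⟨⟨hij.trans_le List.countP_le_length, hj⟩, hij⟩

lemma sum_take_parts_eq_sum_min_colLen (k : ℕ) :
    (lam.parts.take k).sum = ∑ j ∈ Finset.range (partOne lam), min (colLen lam j) k := by
  rw [← sum_range_countP_lt fun p hp => le_partOne_of_mem lam (List.take_subset _ _ hp)]
  exact Finset.sum_congr rfl fun j _ => countP_lt_take lam.sorted k j

lemma map_cells_val {β : Type*} (g : ℕ × ℕ → β) :
    (cells lam).val.map g =
      ∑ j ∈ Finset.range (partOne lam),
        (((List.range (colLen lam j)).map fun i => g (i, j) : List β) : Multiset β) := by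
  have hsingle {γ : Type} (s : Finset γ) (f : γ → β) : s.val.map f = ∑ c ∈ s, {f c} := by
    rw [← Multiset.sum_map_singleton (s.val.map f), Multiset.map_map]
    rfl
  rw [hsingle, Finset.sum_finset_product_right (cells lam) (Finset.range (partOne lam))
    (fun j => Finset.range (colLen lam j)) (fun c => by simp [← mem_cells])]
  refine Finset.sum_congr rfl fun j _ => ?_
  rw [← hsingle, Finset.range_val, Multiset.range, Multiset.map_coe]

end YoungDiagram

section Multiplicities

variable {K : Type*} [DecidableEq K]

lemma sum_count_le_min_of_nodup {c : Multiset K} (hc : c.Nodup) (S : Finset K) :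
    ∑ α ∈ S, c.count α ≤ min (Multiset.card c) S.card := by
  simp only [Multiset.count_eq_of_nodup hc, Finset.sum_boole, Nat.cast_id]
  refine le_min ?_ (Finset.card_filter_le _ _)
  calc {α ∈ S | α ∈ c}.card ≤ c.toFinset.card :=
        Finset.card_le_card fun α hα => Multiset.mem_toFinset.mpr (Finset.mem_filter.mp hα).2
    _ = Multiset.card c := Multiset.toFinset_card_of_nodup hc

lemma sum_count_le_sum_take {N : ℕ} (lam : Partition N) (c : ℕ → Multiset K)
    (hnodup : ∀ j < partOne lam, (c j).Nodup) (hcard : ∀ j, Multiset.card (c j) = colLen lam j)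
    (S : Finset K) :
    ∑ α ∈ S, (∑ j ∈ Finset.range (partOne lam), c j).count α ≤
      (lam.parts.take S.card).sum := by
  simp only [Multiset.count_sum']
  rw [Finset.sum_comm, sum_take_parts_eq_sum_min_colLen]
  gcongr with j hj
  rw [← hcard]
  exact sum_count_le_min_of_nodup (hnodup j (Finset.mem_range.mp hj)) S

lemma exists_isMultPartition (M : Multiset K) {N : ℕ} (hN : Multiset.card M = N) :
    ∃ mu : Partition N, IsMultPartition K M mu := by
  set C : Multiset ℕ := M.toFinset.val.map fun α => M.count α
  refine ⟨⟨C.sort (· ≥ ·), Multiset.pairwise_sort _ _, fun p hp => ?_, ?_⟩,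
    Multiset.sort_eq _ _⟩
  · obtain ⟨α, hα, rfl⟩ := Multiset.mem_map.mp ((Multiset.mem_sort _).mp hp)
    exact Multiset.count_pos.mpr (Multiset.mem_toFinset.mp hα)
  · rw [← hN, ← Multiset.sum_coe, Multiset.sort_eq, ← Multiset.toFinset_sum_count_eq]
    rfl

lemma exists_le_map_eq {α β : Type*} (f : α → β) {s : Multiset α} {t : Multiset β}
    (h : t ≤ s.map f) : ∃ s' ≤ s, s'.map f = t := by
  induction s using Quotient.inductionOn
  induction t using Quotient.inductionOn
  obtain ⟨l, hl, hsub⟩ := Multiset.coe_le.mp h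
  obtain ⟨l', hl', rfl⟩ := List.sublist_map_iff.mp hsub
  exact ⟨l', Multiset.coe_le.mpr hl'.subperm, Quot.sound hl⟩

lemma IsMultPartition.exists_sum_take_eq {M : Multiset K} {N : ℕ} {mu : Partition N}
    (hmu : IsMultPartition K M mu) (i : ℕ) :
    ∃ S : Finset K, S.card ≤ i ∧ (mu.parts.take i).sum = ∑ α ∈ S, M.count α := by
  have hle : (↑(mu.parts.take i) : Multiset ℕ) ≤ M.toFinset.val.map fun α => M.count α :=
    hmu ▸ Multiset.coe_le.mpr (List.take_sublist i _).subperm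
  obtain ⟨s, hs, hmap⟩ := exists_le_map_eq _ hle
  refine ⟨⟨s, Multiset.nodup_of_le hs M.toFinset.nodup⟩, ?_, ?_⟩
  · have := congrArg Multiset.card hmap
    simp only [Multiset.card_map, Multiset.coe_card, List.length_take] at this
    simp [Finset.card, this]
  · rw [← Multiset.sum_coe, ← hmap]
    rfl

end Multiplicities

section Content

variable {K : Type*} {n : ℕ} [NeZero n]

lemma card_lamL {l : ℕ} (hl : 0 < l) (a : Fin n → K) :
    Multiset.card (lamL K l a) = n + l - 1 := by
  have := NeZero.ne n
  simp only [lamL, Multiset.card_add, Multiset.card_replicate, Multiset.card_map,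
    Finset.card_val, Finset.card_univ, Fintype.card_fin]
  omega

lemma lamL_eq_sum_colList {N l : ℕ} {lam : Partition N} {T : ℕ × ℕ → Fin n}
    (hT : IsFilling l 0 lam T) (a : Fin n → K) :
    lamL K l a =
      ∑ j ∈ Finset.range (partOne lam), (((colList lam T j).map a : List K) : Multiset K) := by
  have hcontent : lamL K l a = (fillContent n l 0).map a := by
    simp [fillContent, lamL, Multiset.map_replicate]
  rw [hcontent, ← hT.1, Multiset.map_map, map_cells_val]
  simp [colList, Function.comp_def]

end Content

section SpechtPoly

variable {K : Type*} [Field K] {n : ℕ}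

lemma nodup_map_of_eval_deltaList_ne_zero (a : Fin n → K) :
    ∀ {L : List (Fin n)}, MvPolynomial.eval a (deltaList K L) ≠ 0 → (L.map a).Nodup
  | [], _ => List.nodup_nil
  | x :: L, h => by
    rw [deltaList, map_mul, mul_ne_zero_iff] at h
    refine List.nodup_cons.mpr ⟨fun hx => h.1 ?_, nodup_map_of_eval_deltaList_ne_zero a h.2⟩
    obtain ⟨y, hy, hxy⟩ := List.mem_map.mp hx
    rw [map_list_prod, List.map_map]
    exact List.prod_eq_zero (List.mem_map.mpr ⟨y, hy, by simp [hxy]⟩)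

lemma nodup_map_colList_of_eval_ne_zero {N : ℕ} {lam : Partition N} {T : ℕ × ℕ → Fin n}
    {a : Fin n → K} (hne : MvPolynomial.eval a (spechtPoly K lam T) ≠ 0) {j : ℕ}
    (hj : j < partOne lam) : ((colList lam T j).map a).Nodup := by
  refine nodup_map_of_eval_deltaList_ne_zero a fun h0 => hne ?_
  rw [spechtPoly, map_list_prod, List.map_map]
  exact List.prod_eq_zero (List.mem_map.mpr ⟨j, List.mem_range.mpr hj, h0⟩)

end SpechtPoly

theorem statement1_general (K : Type*) [Field K] [DecidableEq K] (n l : ℕ) [NeZero n]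
    (hl : 0 < l) (lam : Partition (n + l - 1))
    (T : ℕ × ℕ → Fin n) (hT : IsFilling l (0 : Fin n) lam T)
    (a : Fin n → K)
    (ha : ∀ mu : Partition (n + l - 1), IsMultPartition K (lamL K l a) mu → ¬ domLE mu lam) :
    MvPolynomial.eval a (spechtPoly K lam T) = 0 := by
  by_contra hne
  obtain ⟨mu, hmu⟩ := exists_isMultPartition (lamL K l a) (card_lamL hl a)
  refine ha mu hmu fun i => ?_
  obtain ⟨S, hSi, hS⟩ := hmu.exists_sum_take_eq i
  rw [hS, lamL_eq_sum_colList hT]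
  calc _ ≤ (lam.parts.take S.card).sum :=
        sum_count_le_sum_take lam (fun j => ((colList lam T j).map a : List K))
          (fun j hj => Multiset.coe_nodup.mpr (nodup_map_colList_of_eval_ne_zero hne hj))
          (fun j => by simp [colList]) S
    _ ≤ (lam.parts.take i).sum :=
        (List.take_sublist_take_left hSi).sum_le_sum fun _ _ => Nat.zero_le _

/-- Lemma `f_T(a)=0`. If Λ_l(a) is not ⊴ λ, then f_T(a) = 0 for every
tableau T ∈ Tab(l,λ). -/
theorem statement1 (K : Type*) [Field K] [Infinite K] [DecidableEq K] (n l : ℕ) [NeZero n]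
    (hl : 0 < l) (lam : Partition (n + l - 1)) (hlam : l ≤ partOne lam)
    (T : ℕ × ℕ → Fin n) (hT : IsFilling l (0 : Fin n) lam T)
    (a : Fin n → K)
    (ha : ∀ mu : Partition (n + l - 1), IsMultPartition K (lamL K l a) mu → ¬ domLE mu lam) :
    MvPolynomial.eval a (spechtPoly K lam T) = 0 :=
  statement1_general K n l hl lam T hT a ha

end SpechtLL
end

section
/- Let F ⊆ [P_{n+l−1}]_{≥l} be a nonempty upper filter and let f ∈ J_{l,F} be written as f = g_d x_n^d + … + g_1 x_n + g_0 with g_0,…,g_d ∈ K[x_1,…,x_{n−1}] and g_d ≠ 0. Then g_0,…,g_d all belong to J_{l,F_{d+1}}, the corresponding vanishing ideal in K[x_1,…,x_{n−1}] attached to the upper filter F_{d+1} ⊆ [P_{n+l−2}]_{≥l}. -/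
open MvPolynomial

namespace SpechtLL

variable (K : Type*) [Field K]

/-
Fix `b ∈ Kⁿ` whose multiplicity partition `μ` satisfies `l ≤ μ₁` and `μ + ⟨d+1⟩ ∈ F`. The
polynomial `h(t) = f(b, t)` has degree at most `d` and coefficients `gᵢ(b)`, so it suffices to find
more than `d` values `t` for which the multiplicity partition of `(b, t)` lies in `F`; appending `t`
adds one box to `μ`. If `μ` has at most `d` parts, every value `t` not among the coordinates of `b`
gives exactly `μ + ⟨d+1⟩ = μ ∪ (1)`, and there are infinitely many such `t`. Otherwise every
coordinate value of `b` whose multiplicity is one of `μ₁, …, μ_{d+1}` adds a box in one of the first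
`d+1` rows, giving a partition that dominates `μ + ⟨d+1⟩`; there are at least `d+1` such values.
-/

open Finset

/-- On a non-increasing list of parts this adds a box to the first row of length `c`. -/
def incFirst (c : ℕ) : List ℕ → List ℕ
  | [] => []
  | a :: r => if a = c then (a + 1) :: r else a :: incFirst c r

section incFirst

variable {c : ℕ} {L : List ℕ}

lemma incFirst_of_not_mem : ∀ {L : List ℕ}, c ∉ L → incFirst c L = L
  | [], _ => rfl
  | a :: r, h => by
    rw [List.mem_cons, not_or] at h
    simp [incFirst, Ne.symm h.1, incFirst_of_not_mem h.2]

lemma mem_incFirst {x : ℕ} : ∀ {L : List ℕ}, x ∈ incFirst c L → x = c + 1 ∨ x ∈ L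
  | [], h => by simp [incFirst] at h
  | a :: r, h => by
    unfold incFirst at h
    split_ifs at h with hac
    · subst hac; simp only [List.mem_cons] at h ⊢; tauto
    · rcases List.mem_cons.mp h with rfl | h
      · exact Or.inr List.mem_cons_self
      · exact (mem_incFirst h).imp_right (List.mem_cons_of_mem a)

lemma coe_incFirst : ∀ {L : List ℕ}, c ∈ L →
    (incFirst c L : Multiset ℕ) = (c + 1) ::ₘ (L : Multiset ℕ).erase c
  | a :: r, h => by
    by_cases hac : a = c
    · subst hac; simp [incFirst]
    · have hcr : c ∈ r := (List.mem_cons.mp h).resolve_left (Ne.symm hac)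
      simp only [incFirst, if_neg hac]
      rw [← Multiset.cons_coe, ← Multiset.cons_coe, coe_incFirst hcr,
        Multiset.erase_cons_tail _ hac, Multiset.cons_swap]

lemma sum_incFirst (hc : c ∈ L) : (incFirst c L).sum = L.sum + 1 := by
  rw [← Multiset.sum_coe, coe_incFirst hc, Multiset.sum_cons, ← Multiset.sum_coe L,
    ← Multiset.sum_erase (Multiset.mem_coe.mpr hc)]
  ring

lemma pairwise_incFirst : ∀ {L : List ℕ}, L.Pairwise (· ≥ ·) → (incFirst c L).Pairwise (· ≥ ·)
  | [], _ => List.Pairwise.nil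
  | a :: r, hs => by
    rw [List.pairwise_cons] at hs
    unfold incFirst
    split_ifs with hac
    · exact List.pairwise_cons.mpr ⟨fun b hb => (hs.1 b hb).trans a.le_succ, hs.2⟩
    · refine List.pairwise_cons.mpr ⟨fun b hb => ?_, pairwise_incFirst hs.2⟩
      by_cases hcr : c ∈ r
      · rcases mem_incFirst hb with rfl | h
        · have := hs.1 c hcr; omega
        · exact hs.1 b h
      · exact hs.1 b (by rwa [incFirst_of_not_mem hcr] at hb)

lemma sum_take_incFirst : ∀ (L : List ℕ) (i : ℕ),
    ((incFirst c L).take i).sum = (L.take i).sum + if c ∈ L.take i then 1 else 0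
  | [], i => by simp [incFirst]
  | a :: r, 0 => by simp
  | a :: r, i + 1 => by
    by_cases hac : a = c
    · subst hac
      simp only [incFirst, ↓reduceIte, List.take_succ_cons, List.sum_cons, List.mem_cons, true_or]
      ring
    · simp only [incFirst, hac, ↓reduceIte, List.take_succ_cons, List.sum_cons,
        sum_take_incFirst r i, List.mem_cons, Ne.symm hac, false_or]
      ring

lemma headD_le_headD_incFirst (L : List ℕ) : L.headD 0 ≤ (incFirst c L).headD 0 := by
  cases L with
  | nil => rfl
  | cons a r => by_cases hac : a = c <;> simp [incFirst, hac]

end incFirst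

section Antitone

variable {L : List ℕ} (hL : L.Pairwise (· ≥ ·))
include hL

lemma mem_take_of_le {i c c' : ℕ} (hc : c ∈ L) (hc' : c' ∈ L.take i) (h : c' ≤ c) :
    c ∈ L.take i := by
  induction L generalizing i with
  | nil => simp at hc
  | cons a r ih =>
    rw [List.pairwise_cons] at hL
    cases i with
    | zero => simp at hc'
    | succ i =>
      simp only [List.take_succ_cons, List.mem_cons] at hc' ⊢
      rcases List.mem_cons.mp hc with rfl | hcr
      · exact Or.inl rfl
      · rcases hc' with rfl | h'
        · have := hL.1 c hcr; omega
        · exact Or.inr (ih hL.2 hcr h')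

lemma getD_le_of_mem_take {d x : ℕ} (hx : x ∈ L.take (d + 1)) (hd : d < L.length) :
    L.getD d 0 ≤ x := by
  obtain ⟨j, hj, rfl⟩ := List.getElem_of_mem hx
  simp only [List.length_take, lt_min_iff] at hj
  rw [List.getD_eq_getElem _ _ hd, List.getElem_take]
  rcases (Nat.lt_succ_iff.mp hj.1).lt_or_eq with hjd | rfl
  · exact List.pairwise_iff_getElem.mp hL j d hj.2 hd hjd
  · rfl

end Antitone

lemma getD_mem_of_lt_length {α : Type*} {L : List α} {d : ℕ} (x : α) (hd : d < L.length) :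
    L.getD d x ∈ L := by
  rw [List.getD_eq_getElem _ _ hd]
  exact List.getElem_mem hd

lemma length_take_le_countP_mem_take {α : Type*} [DecidableEq α] (L : List α) (k : ℕ) :
    (L.take k).length ≤ L.countP (· ∈ L.take k) := by
  calc (L.take k).length = (L.take k).countP (· ∈ L.take k) :=
        (List.countP_eq_length.mpr fun _ ha => decide_eq_true ha).symm
    _ ≤ L.countP (· ∈ L.take k) := (List.take_sublist k L).countP_le

namespace Partition

variable {N : ℕ}

def incFirst (mu : Partition N) (c : ℕ) (hc : c ∈ mu.parts) : Partition (N + 1) where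
  parts := SpechtLL.incFirst c mu.parts
  sorted := pairwise_incFirst mu.sorted
  pos p hp := (mem_incFirst hp).elim (fun h => h ▸ c.succ_pos) (mu.pos p)
  sum_eq := by rw [sum_incFirst hc, mu.sum_eq]

lemma partOne_le_partOne_incFirst (mu : Partition N) (c : ℕ) (hc : c ∈ mu.parts) :
    partOne mu ≤ partOne (mu.incFirst c hc) :=
  headD_le_headD_incFirst _

lemma domLE_incFirst {mu : Partition N} {c c' : ℕ} (hc' : c' ∈ mu.parts) (hc : c ∈ mu.parts)
    (h : c' ≤ c) : domLE (mu.incFirst c' hc') (mu.incFirst c hc) := by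
  intro i
  simp only [incFirst, sum_take_incFirst]
  by_cases hci : c' ∈ mu.parts.take i
  · simp [hci, mem_take_of_le mu.sorted hc hci h]
  · simp only [if_neg hci]
    split <;> omega

end Partition

section IsAddBox

variable {N N' d : ℕ} {mu : Partition N} {nu : Partition N'}

lemma IsAddBox.coe_parts_of_lt_length (h : IsAddBox mu (d + 1) nu) (hd : d < mu.parts.length) :
    (nu.parts : Multiset ℕ) = incFirst (mu.parts.getD d 0) mu.parts := by
  rw [h, addBoxMultiset, if_pos (Nat.succ_le_of_lt hd), coe_incFirst (getD_mem_of_lt_length 0 hd),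
    Nat.add_sub_cancel, add_comm, Multiset.singleton_add]

lemma IsAddBox.coe_parts_of_length_le (h : IsAddBox mu (d + 1) nu) (hd : mu.parts.length ≤ d) :
    (nu.parts : Multiset ℕ) = mu.parts + {1} := by
  rw [h, addBoxMultiset, if_neg (by omega)]

lemma IsAddBox.parts_eq_incFirst (h : IsAddBox mu (d + 1) nu) (hd : d < mu.parts.length) :
    nu.parts = incFirst (mu.parts.getD d 0) mu.parts :=
  List.Perm.eq_of_pairwise' nu.sorted (pairwise_incFirst mu.sorted)
    (Multiset.coe_eq_coe.mp (h.coe_parts_of_lt_length hd))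

lemma IsAddBox.succ_eq (h : IsAddBox mu (d + 1) nu) : N + 1 = N' := by
  rw [← mu.sum_eq, ← nu.sum_eq]
  rcases lt_or_ge d mu.parts.length with hd | hd
  · rw [h.parts_eq_incFirst hd, sum_incFirst (getD_mem_of_lt_length 0 hd)]
  · rw [← Multiset.sum_coe, ← Multiset.sum_coe, h.coe_parts_of_length_le hd]
    simp

end IsAddBox

section IsMultPartition

variable {α : Type*} [DecidableEq α] {N N' : ℕ} {M : Multiset α} {mu : Partition N}

lemma IsMultPartition.count_mem (hM : IsMultPartition α M mu) {v : α} (hv : v ∈ M) :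
    M.count v ∈ mu.parts := by
  rw [← Multiset.mem_coe, hM]
  exact Multiset.mem_map_of_mem _ (Multiset.mem_toFinset.mpr hv)

lemma IsMultPartition.card_filter (hM : IsMultPartition α M mu) (p : ℕ → Prop) [DecidablePred p] :
    #(M.toFinset.filter fun v => p (M.count v)) = mu.parts.countP p := by
  rw [← Multiset.coe_countP, hM, Multiset.countP_map, Finset.card_def, Finset.filter_val]

lemma IsMultPartition.cons_of_mem (hM : IsMultPartition α M mu) {v : α} (hv : v ∈ M) :
    IsMultPartition α (v ::ₘ M) (mu.incFirst (M.count v) (hM.count_mem hv)) := by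
  have hvS : v ∈ M.toFinset.val := Multiset.mem_toFinset.mpr hv
  have hS : v ::ₘ M.toFinset.val.erase v = M.toFinset.val := Multiset.cons_erase hvS
  have hcount : ∀ w ∈ M.toFinset.val.erase v, (v ::ₘ M).count w = M.count w := by
    rintro w hw
    refine Multiset.count_cons_of_ne ?_ M
    rintro rfl
    exact M.toFinset.nodup.notMem_erase hw
  show (incFirst (M.count v) mu.parts : Multiset ℕ) = _
  rw [coe_incFirst (hM.count_mem hv), hM, Multiset.toFinset_cons,
    Finset.insert_eq_self.mpr (Multiset.mem_toFinset.mpr hv), ← hS, Multiset.map_cons,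
    Multiset.map_cons, Multiset.erase_cons_head, Multiset.count_cons_self,
    Multiset.map_congr rfl hcount]

lemma IsMultPartition.cons_of_not_mem (hM : IsMultPartition α M mu) {v : α} (hv : v ∉ M)
    {nu : Partition N'} (hnu : (nu.parts : Multiset ℕ) = mu.parts + {1}) :
    IsMultPartition α (v ::ₘ M) nu := by
  have hvS : v ∉ M.toFinset := mt Multiset.mem_toFinset.mp hv
  have hcount : ∀ w ∈ M.toFinset.val, (v ::ₘ M).count w = M.count w := by
    rintro w hw
    refine Multiset.count_cons_of_ne ?_ M
    rintro rfl
    exact hvS hw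
  rw [IsMultPartition, hnu, hM, Multiset.toFinset_cons, Finset.insert_val_of_notMem hvS,
    Multiset.map_cons, Multiset.count_cons_self, Multiset.count_eq_zero_of_notMem hv,
    Multiset.map_congr rfl hcount, add_comm, Multiset.singleton_add]

end IsMultPartition

section Extensions

variable {α : Type*} [DecidableEq α] {N d l : ℕ} {M : Multiset α} {mu : Partition N}

lemma exists_cons_values_of_lt_length (hM : IsMultPartition α M mu) (hl : l ≤ partOne mu)
    {F : Set (Partition (N + 1))}
    (hF : ∀ mu ∈ F, ∀ nu : Partition (N + 1), l ≤ partOne nu → domLE mu nu → nu ∈ F)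
    (hd : d < mu.parts.length) {nu : Partition (N + 1)} (hnuF : nu ∈ F)
    (hnu : IsAddBox mu (d + 1) nu) :
    ∃ s : Finset α, d < #s ∧ ∀ t ∈ s, ∃ mu' ∈ F, IsMultPartition α (t ::ₘ M) mu' := by
  refine ⟨M.toFinset.filter fun v => M.count v ∈ mu.parts.take (d + 1), ?_, fun v hv => ?_⟩
  · have := length_take_le_countP_mem_take mu.parts (d + 1)
    rw [List.length_take] at this
    rw [hM.card_filter (· ∈ mu.parts.take (d + 1))]
    omega
  · obtain ⟨hvM, hcount⟩ := Finset.mem_filter.mp hv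
    have hvM := Multiset.mem_toFinset.mp hvM
    refine ⟨_, hF nu hnuF _ (hl.trans (mu.partOne_le_partOne_incFirst _ _)) ?_,
      hM.cons_of_mem hvM⟩
    intro i
    rw [hnu.parts_eq_incFirst hd]
    exact Partition.domLE_incFirst (getD_mem_of_lt_length 0 hd) _
      (getD_le_of_mem_take mu.sorted hcount hd) i

lemma exists_cons_values_of_length_le [Infinite α] (hM : IsMultPartition α M mu)
    (hd : mu.parts.length ≤ d) {nu : Partition (N + 1)} (hnu : IsAddBox mu (d + 1) nu) :
    ∃ s : Finset α, d < #s ∧ ∀ t ∈ s, IsMultPartition α (t ::ₘ M) nu := by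
  obtain ⟨s, hsM, hcard⟩ :=
    (M.toFinset : Set α).toFinite.infinite_compl.exists_subset_card_eq (d + 1)
  refine ⟨s, by omega, fun t ht => hM.cons_of_not_mem ?_ (hnu.coe_parts_of_length_le hd)⟩
  simpa using hsM ht

lemma exists_cons_values [Infinite α] {N' : ℕ} (hM : IsMultPartition α M mu)
    (hl : l ≤ partOne mu) {F : Set (Partition N')}
    (hF : ∀ mu ∈ F, ∀ nu : Partition N', l ≤ partOne nu → domLE mu nu → nu ∈ F)
    {nu : Partition N'} (hnuF : nu ∈ F) (hnu : IsAddBox mu (d + 1) nu) :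
    ∃ s : Finset α, d < #s ∧ ∀ t ∈ s, ∃ mu' ∈ F, IsMultPartition α (t ::ₘ M) mu' := by
  obtain rfl := hnu.succ_eq
  rcases lt_or_ge d mu.parts.length with hd | hd
  · exact exists_cons_values_of_lt_length hM hl hF hd hnuF hnu
  · obtain ⟨s, hs, hext⟩ := exists_cons_values_of_length_le hM hd hnu
    exact ⟨s, hs, fun t ht => ⟨nu, hnuF, hext t ht⟩⟩

end Extensions

lemma eval_eq_zero_of_eval_snoc_eq_zero {R : Type*} [CommRing R] [IsDomain R] {n d : ℕ}
    (g : ℕ → MvPolynomial (Fin n) R) (b : Fin n → R) (s : Finset R) (hs : d < #s)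
    (h : ∀ t ∈ s, eval (Fin.snoc b t)
      (∑ i ∈ range (d + 1), rename Fin.castSucc (g i) * X (Fin.last n) ^ i) = 0) :
    ∀ i ≤ d, eval b (g i) = 0 := by
  set p : Polynomial R := ∑ i ∈ range (d + 1), Polynomial.C (eval b (g i)) * Polynomial.X ^ i
  have heval : ∀ t, p.eval t =
      eval (Fin.snoc b t) (∑ i ∈ range (d + 1), rename Fin.castSucc (g i) * X (Fin.last n) ^ i) := by
    intro t
    simp [p, Polynomial.eval_finsetSum, eval_rename, Function.comp_def]
  have hdeg : p.natDegree ≤ d := Polynomial.natDegree_sum_le_of_forall_le _ _ fun i hi =>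
    (Polynomial.natDegree_C_mul_X_pow_le _ _).trans (Nat.lt_succ_iff.mp (mem_range.mp hi))
  have hp : p = 0 := Polynomial.eq_zero_of_natDegree_lt_card_of_eval_eq_zero' p s
    (fun t ht => (heval t).trans (h t ht)) (hdeg.trans_lt hs)
  intro i hi
  have hcoeff : p.coeff i = eval b (g i) := by
    simp [p, Nat.lt_succ_of_le hi]
  rw [← hcoeff, hp, Polynomial.coeff_zero]

lemma mem_vanishingIdeal {n : ℕ} {P : (Fin n → K) → Prop} {f : MvPolynomial (Fin n) K} :
    f ∈ vanishingIdeal K n P ↔ ∀ a, P a → eval a f = 0 :=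
  Iff.rfl

lemma lamL_snoc {α : Type*} {n : ℕ} [NeZero n] (l : ℕ) (b : Fin n → α) (t : α) :
    lamL α l (Fin.snoc b t : Fin (n + 1) → α) = t ::ₘ lamL α l b := by
  have h0 : (Fin.snoc b t : Fin (n + 1) → α) 0 = b 0 := by
    rw [← Fin.castSucc_zero', Fin.snoc_castSucc]
  have huniv : (univ : Finset (Fin (n + 1))).val.map (Fin.snoc b t) =
      t ::ₘ (univ : Finset (Fin n)).val.map b := by
    rw [Fin.univ_castSuccEmb, Finset.cons_val, Multiset.map_cons, Fin.snoc_last,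
      Finset.map_val, Multiset.map_map]
    congr 1
    exact Multiset.map_congr rfl fun x _ => Fin.snoc_castSucc (α := fun _ => α) t b x
  rw [lamL, lamL, h0, huniv, Multiset.add_cons]

theorem statement3_general (K : Type*) [Field K] [Infinite K] [DecidableEq K] (n l d : ℕ) [NeZero n]
    (F : Set (Partition (n + 1 + l - 1)))
    (hFup : ∀ mu ∈ F, ∀ nu : Partition (n + 1 + l - 1), l ≤ partOne nu → domLE mu nu → nu ∈ F)
    (g : ℕ → MvPolynomial (Fin n) K)
    (f : MvPolynomial (Fin (n + 1)) K)
    (hf : f = ∑ i ∈ Finset.range (d + 1),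
        MvPolynomial.rename Fin.castSucc (g i) * MvPolynomial.X (Fin.last n) ^ i)
    (hfJ : f ∈ vanishingIdeal K (n + 1)
        (fun a => ∃ mu ∈ F, IsMultPartition K (lamL K l a) mu)) :
    ∀ i ≤ d, g i ∈ vanishingIdeal K n (fun a =>
      ∃ mu : Partition (n + l - 1),
        (l ≤ partOne mu ∧ ∃ nu ∈ F, IsAddBox mu (d + 1) nu) ∧
        IsMultPartition K (lamL K l a) mu) := by
  intro i hi
  rw [mem_vanishingIdeal]
  rintro b ⟨mu, ⟨hmu, nu, hnuF, hnu⟩, hM⟩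
  obtain ⟨s, hs, hext⟩ := exists_cons_values hM hmu hFup hnuF hnu
  refine eval_eq_zero_of_eval_snoc_eq_zero g b s hs (fun t ht => ?_) i hi
  rw [← hf]
  exact hfJ _ (by simpa only [lamL_snoc] using hext t ht)

/-- Lemma `keylemma`. If f = Σ gᵢ xₙⁱ ∈ J_{l,F} (ambient ring in n+1
variables x₁,…,x_{n+1}, so the "body" ring has n variables), then each gᵢ ∈ J_{l,F_{d+1}}. -/
theorem statement3 (K : Type*) [Field K] [Infinite K] [DecidableEq K] (n l d : ℕ) [NeZero n]
    (hl : 0 < l)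
    (F : Set (Partition (n + 1 + l - 1)))
    (hFsub : ∀ mu ∈ F, l ≤ partOne mu)
    (hFup : ∀ mu ∈ F, ∀ nu : Partition (n + 1 + l - 1), l ≤ partOne nu → domLE mu nu → nu ∈ F)
    (hFne : F.Nonempty)
    (g : ℕ → MvPolynomial (Fin n) K) (hgd : g d ≠ 0)
    (f : MvPolynomial (Fin (n + 1)) K)
    (hf : f = ∑ i ∈ Finset.range (d + 1),
        MvPolynomial.rename Fin.castSucc (g i) * MvPolynomial.X (Fin.last n) ^ i)
    (hfJ : f ∈ vanishingIdeal K (n + 1)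
        (fun a => ∃ mu ∈ F, IsMultPartition K (lamL K l a) mu)) :
    ∀ i ≤ d, g i ∈ vanishingIdeal K n (fun a =>
      ∃ mu : Partition (n + l - 1),
        (l ≤ partOne mu ∧ ∃ nu ∈ F, IsAddBox mu (d + 1) nu) ∧
        IsMultPartition K (lamL K l a) mu) :=
  statement3_general K n l d F hFup g f hf hfJ

end SpechtLL
end

section
/- Let λ ∈ [P_{n+l−1}]_{≥l} and let F = {ρ ∈ [P_{n+l−1}]_{≥l} : ρ ⊴ λ}. For μ ∈ P_{n−1}, if the set X := ⟨μ⟩^l ∩ F is nonempty, then there exists an element λ̃ ∈ X such that w_μ(ρ) > w_μ(λ̃) for every ρ ∈ X with ρ ≠ λ̃ (i.e. λ̃ is the unique minimizer of w_μ on X, with strict inequality). -/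
open MvPolynomial

namespace SpechtLL

variable (K : Type*) [Field K]

/-!
A standard tableau of shape `ρ` with `sh_{<n}(T) = μ` exists exactly when `ρ / μ` is a horizontal
strip, and then `w(T)` only depends on `ρ`: it is `stripWeight μ ρ`, which counts the cells of `μ`
above the strip row by row through the column partial sums `colSum`. Dominance of partitions is
reversed by their column partial sums, so the weight strictly decreases along the dominance order
of strips over `μ`. The strips in question are closed under the dominance join (the pointwise
minimum of column partial sums), so a minimiser of the weight is the greatest element of `X`
and therefore its unique minimiser.
-/

section Partitions

open Finset

variable {N : ℕ}

lemma lt_countP_iff_lt_getD {L : List ℕ} (hL : L.Pairwise (· ≥ ·)) (i j : ℕ) :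
    i < L.countP (fun p => decide (j < p)) ↔ j < L.getD i 0 := by
  induction L generalizing i with
  | nil => simp
  | cons a t ih =>
    rw [List.pairwise_cons] at hL
    by_cases hja : j < a
    · rw [List.countP_cons_of_pos (by simpa using hja)]
      cases i with
      | zero => simp [hja]
      | succ i => simpa using ih hL.2 i
    · have hzero : t.countP (fun p => decide (j < p)) = 0 :=
        List.countP_eq_zero.2 fun x hx => by have := hL.1 x hx; simp only [decide_eq_true_eq]; omega
      rw [List.countP_cons_of_neg (by simpa using hja), hzero]
      cases i with
      | zero => simpa using hja
      | succ i => simpa [hzero] using ih hL.2 i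

lemma lt_colLen_iff (ρ : Partition N) (i j : ℕ) : i < colLen ρ j ↔ j < ρ.parts.getD i 0 :=
  lt_countP_iff_lt_getD ρ.sorted i j

lemma colLen_antitone (ρ : Partition N) : Antitone (colLen ρ) := fun j j' h => by
  by_contra! hlt
  exact lt_irrefl _ ((lt_colLen_iff ρ _ j).2 (h.trans_lt ((lt_colLen_iff ρ _ j').1 hlt)))

lemma getD_antitone (ρ : Partition N) : Antitone fun i => ρ.parts.getD i 0 := fun i i' h => by
  by_contra! hlt
  exact lt_irrefl _ ((lt_colLen_iff ρ i _).1 (h.trans_lt ((lt_colLen_iff ρ i' _).2 hlt)))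

lemma partOne_eq_getD (ρ : Partition N) : partOne ρ = ρ.parts.getD 0 0 := by
  cases h : ρ.parts <;> simp [partOne, h]

lemma getD_le_partOne (ρ : Partition N) (i : ℕ) : ρ.parts.getD i 0 ≤ partOne ρ := by
  rw [partOne_eq_getD]
  exact getD_antitone ρ (Nat.zero_le i)

lemma colLen_zero (ρ : Partition N) : colLen ρ 0 = ρ.parts.length :=
  List.countP_eq_length.2 fun p hp => by simpa using ρ.pos p hp

lemma colLen_le_length (ρ : Partition N) (j : ℕ) : colLen ρ j ≤ ρ.parts.length :=
  List.countP_le_length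

lemma length_le (ρ : Partition N) : ρ.parts.length ≤ N :=
  (List.length_le_sum_of_one_le _ ρ.pos).trans_eq ρ.sum_eq

lemma partOne_le (ρ : Partition N) : partOne ρ ≤ N := by
  have hsum := ρ.sum_eq
  cases h : ρ.parts with
  | nil => simp [partOne, h]
  | cons a t =>
    simp only [h, List.sum_cons] at hsum
    simp only [partOne, h, List.headD_cons]
    omega

lemma Partition.ext_colLen {ρ τ : Partition N} (h : colLen ρ = colLen τ) : ρ = τ := by
  have hgetD : ∀ i, ρ.parts.getD i 0 = τ.parts.getD i 0 := fun i =>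
    eq_of_forall_lt_iff fun j => by rw [← lt_colLen_iff, ← lt_colLen_iff, h]
  have hlen : ρ.parts.length = τ.parts.length := by rw [← colLen_zero, ← colLen_zero, h]
  obtain ⟨ρp, _, _, _⟩ := ρ
  obtain ⟨τp, _, _, _⟩ := τ
  congr
  refine List.ext_getElem hlen fun i h₁ h₂ => ?_
  have := hgetD i
  rwa [List.getD_eq_getElem _ 0 h₁, List.getD_eq_getElem _ 0 h₂] at this

lemma getD_colLen_succ_of_lt (mu : Partition N) {j : ℕ} (h : colLen mu (j + 1) < colLen mu j) :
    mu.parts.getD (colLen mu (j + 1)) 0 = j + 1 := by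
  refine eq_of_forall_lt_iff fun x => ?_
  rw [← lt_colLen_iff]
  constructor
  · intro hx
    by_contra! hjx
    exact absurd (colLen_antitone mu hjx) (not_le.2 hx)
  · intro hx
    exact h.trans_le (colLen_antitone mu (Nat.lt_succ_iff.1 hx))

lemma sum_take_eq_sum_getD (L : List ℕ) (k : ℕ) :
    (L.take k).sum = ∑ i ∈ range k, L.getD i 0 := by
  induction k generalizing L with
  | zero => simp
  | succ k ih =>
    cases L with
    | nil => simp
    | cons a t => simp [sum_range_succ', ih, add_comm]

lemma sum_getD (ρ : Partition N) {B : ℕ} (hB : ρ.parts.length ≤ B) :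
    ∑ i ∈ range B, ρ.parts.getD i 0 = N := by
  rw [← sum_take_eq_sum_getD, List.take_of_length_le hB, ρ.sum_eq]

lemma card_filter_lt_range (a b : ℕ) : ((range b).filter (· < a)).card = min a b := by
  rw [← card_range (min a b)]
  congr 1
  ext
  simp only [mem_filter, mem_range]
  omega

/-- Double counting of the pairs `(i, j)` with `i < u j`, equivalently `j < v i`. -/
lemma sum_range_eq_sum_min {u v : ℕ → ℕ} {B : ℕ} (huv : ∀ i j, i < u j ↔ j < v i)
    (hu : ∀ j, u j ≤ B) (m : ℕ) :
    ∑ j ∈ range m, u j = ∑ i ∈ range B, min (v i) m := by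
  calc ∑ j ∈ range m, u j
      = ∑ j ∈ range m, ∑ i ∈ range B, if j < v i then 1 else 0 := by
        refine sum_congr rfl fun j _ => ?_
        simp_rw [← huv, ← card_filter, card_filter_lt_range, min_eq_left (hu j)]
    _ = ∑ i ∈ range B, ∑ j ∈ range m, if j < v i then 1 else 0 := sum_comm
    _ = ∑ i ∈ range B, min (v i) m := by simp_rw [← card_filter, card_filter_lt_range]

def colSum (ρ : Partition N) (m : ℕ) : ℕ := ∑ j ∈ range m, colLen ρ j

lemma colSum_succ (ρ : Partition N) (m : ℕ) : colSum ρ (m + 1) = colSum ρ m + colLen ρ m :=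
  sum_range_succ _ _

lemma colSum_mono (ρ : Partition N) : Monotone (colSum ρ) := fun _ _ h =>
  sum_le_sum_of_subset (range_subset_range.2 h)

lemma colSum_eq_sum_min (ρ : Partition N) {B : ℕ} (hB : ρ.parts.length ≤ B) (m : ℕ) :
    colSum ρ m = ∑ i ∈ range B, min (ρ.parts.getD i 0) m :=
  sum_range_eq_sum_min (lt_colLen_iff ρ) (fun j => (colLen_le_length ρ j).trans hB) m

lemma sum_take_eq_sum_min (ρ : Partition N) {B : ℕ} (hB : partOne ρ ≤ B) (k : ℕ) :
    (ρ.parts.take k).sum = ∑ j ∈ range B, min (colLen ρ j) k := by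
  rw [sum_take_eq_sum_getD]
  exact sum_range_eq_sum_min (fun i j => (lt_colLen_iff ρ j i).symm)
    (fun i => (getD_le_partOne ρ i).trans hB) k

lemma colSum_of_partOne_le (ρ : Partition N) {m : ℕ} (hm : partOne ρ ≤ m) : colSum ρ m = N := by
  rw [colSum_eq_sum_min ρ le_rfl]
  exact (sum_congr rfl fun i _ => min_eq_left ((getD_le_partOne ρ i).trans hm)).trans
    (sum_getD ρ le_rfl)

lemma colSum_le (ρ : Partition N) (m : ℕ) : colSum ρ m ≤ N :=
  (colSum_mono ρ (le_max_left m (partOne ρ))).trans_eq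
    (colSum_of_partOne_le ρ (le_max_right _ _))

lemma sum_tsub_le_sum_tsub {a b : ℕ → ℕ} {m s B : ℕ} (hsB : s ≤ B)
    (ha_ge : ∀ i < s, m ≤ a i) (ha_le : ∀ i, s ≤ i → a i ≤ m)
    (hab : ∑ i ∈ range s, a i ≤ ∑ i ∈ range s, b i) :
    ∑ i ∈ range B, (a i - m) ≤ ∑ i ∈ range B, (b i - m) := by
  have hconst : ∑ _i ∈ range s, m = s * m := by simp
  have ha_out : ∑ i ∈ range B, (a i - m) = ∑ i ∈ range s, (a i - m) :=
    (sum_subset (range_subset_range.2 hsB) fun i _ hi => by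
      have := ha_le i (by simpa using hi); omega).symm
  have ha_in : ∑ i ∈ range s, a i = ∑ i ∈ range s, (a i - m) + s * m := by
    rw [← hconst, ← sum_add_distrib]
    exact sum_congr rfl fun i hi => by have := ha_ge i (mem_range.1 hi); omega
  have hb_in : ∑ i ∈ range s, b i ≤ ∑ i ∈ range s, (b i - m) + s * m := by
    rw [← hconst, ← sum_add_distrib]
    exact sum_le_sum fun i _ => by omega
  have hb_out : ∑ i ∈ range s, (b i - m) ≤ ∑ i ∈ range B, (b i - m) :=
    sum_le_sum_of_subset (range_subset_range.2 hsB)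
  omega

/-- Dominance reverses on conjugate partitions. -/
lemma domLE_iff_colSum_le (ρ τ : Partition N) : domLE ρ τ ↔ ∀ m, colSum τ m ≤ colSum ρ m := by
  have hrows : ∀ (σ : Partition N) m, colSum σ m + ∑ i ∈ range N, (σ.parts.getD i 0 - m) = N :=
    fun σ m => by
      rw [colSum_eq_sum_min σ (length_le σ), ← sum_add_distrib]
      exact (sum_congr rfl fun _ _ => by omega).trans (sum_getD σ (length_le σ))
  have hcols : ∀ (σ : Partition N) k, (σ.parts.take k).sum + ∑ j ∈ range N, (colLen σ j - k) = N :=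
    fun σ k => by
      rw [sum_take_eq_sum_min σ (partOne_le σ), ← sum_add_distrib]
      exact (sum_congr rfl fun _ _ => by omega).trans (colSum_of_partOne_le σ (partOne_le σ))
  constructor
  · intro h m
    have := sum_tsub_le_sum_tsub (b := fun i => τ.parts.getD i 0) ((colLen_le_length ρ m).trans
      (length_le ρ)) (fun i hi => ((lt_colLen_iff ρ i m).1 hi).le)
      (fun i hi => not_lt.1 fun h' => absurd ((lt_colLen_iff ρ i m).2 h') (not_lt.2 hi))
      (by rw [← sum_take_eq_sum_getD, ← sum_take_eq_sum_getD]; exact h _)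
    have := hrows ρ m
    have := hrows τ m
    omega
  · intro h k
    have := sum_tsub_le_sum_tsub (b := colLen ρ) ((getD_le_partOne τ k).trans (partOne_le τ))
      (fun j hj => ((lt_colLen_iff τ k j).2 hj).le)
      (fun j hj => not_lt.1 fun h' => absurd ((lt_colLen_iff τ k j).1 h') (not_lt.2 hj)) (h _)
    have := hcols ρ k
    have := hcols τ k
    omega

lemma partOne_le_of_domLE {ρ τ : Partition N} (h : domLE ρ τ) : partOne ρ ≤ partOne τ := by
  have := h 1
  rwa [sum_take_eq_sum_getD, sum_take_eq_sum_getD, sum_range_one, sum_range_one,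
    ← partOne_eq_getD, ← partOne_eq_getD] at this

lemma lt_card_filter_iff {c : ℕ → ℕ} (hc : Antitone c) {B : ℕ} (hB : ∀ j, B ≤ j → c j = 0)
    (i j : ℕ) : j < ((range B).filter fun j' => i < c j').card ↔ i < c j := by
  constructor
  · intro hj
    by_contra! hcj
    refine absurd (card_le_card fun j' hj' => ?_) (not_le.2 (card_range j ▸ hj))
    simp only [mem_filter, mem_range] at hj' ⊢
    by_contra! hjj'
    exact absurd ((hc hjj').trans hcj) (not_le.2 hj'.2)
  · intro hcj
    have hjB : j < B := by
      by_contra! hjB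
      simp [hB j hjB] at hcj
    have := card_le_card (s := range (j + 1)) (t := (range B).filter fun j' => i < c j')
      fun j' hj' => by
        simp only [mem_filter, mem_range] at hj' ⊢
        exact ⟨by omega, hcj.trans_le (hc (Nat.lt_succ_iff.1 hj'))⟩
    rwa [card_range] at this

lemma exists_colLen_eq {c : ℕ → ℕ} (hc : Antitone c) {B : ℕ} (hB : ∀ j, B ≤ j → c j = 0)
    (hsum : ∑ j ∈ range B, c j = N) : ∃ σ : Partition N, colLen σ = c := by
  set f : ℕ → ℕ := fun i => ((range B).filter fun j => i < c j).card
  have hf : ∀ i j, j < f i ↔ i < c j := lt_card_filter_iff hc hB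
  have hget : ∀ i, ((List.range (c 0)).map f).getD i 0 = if i < c 0 then f i else 0 := by
    intro i
    split_ifs with h <;> simp [List.getD_eq_getElem?_getD, h]
  have hlt : ∀ i j, j < ((List.range (c 0)).map f).getD i 0 ↔ i < c j := by
    intro i j
    rw [hget]
    split_ifs with h
    · exact hf i j
    · exact ⟨fun h' => absurd h' (Nat.not_lt_zero _),
        fun h' => absurd (h'.trans_le (hc (Nat.zero_le j))) h⟩
  refine ⟨⟨(List.range (c 0)).map f, ?_, ?_, ?_⟩, ?_⟩
  · exact List.pairwise_lt_range.map f fun i i' hii' => card_le_card fun j hj => by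
      simp only [mem_filter] at hj ⊢
      exact ⟨hj.1, hii'.trans hj.2⟩
  · simp only [List.mem_map, List.mem_range]
    rintro _ ⟨i, hi, rfl⟩
    exact (hf i 0).2 hi
  · rw [← List.take_length (l := (List.range (c 0)).map f), sum_take_eq_sum_getD,
      List.length_map, List.length_range]
    calc ∑ i ∈ range (c 0), ((List.range (c 0)).map f).getD i 0
        = ∑ i ∈ range (c 0), f i := sum_congr rfl fun i hi => by rw [hget, if_pos (mem_range.1 hi)]
      _ = ∑ j ∈ range B, min (c j) (c 0) :=
        sum_range_eq_sum_min (fun i j => hf j i)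
          (fun j => (card_filter_le _ _).trans_eq (card_range B)) _
      _ = N := (sum_congr rfl fun j _ => min_eq_left (hc (Nat.zero_le j))).trans hsum
  · funext j
    exact eq_of_forall_lt_iff fun i => by rw [lt_colLen_iff, hlt]

/-- The join of two partitions in the dominance order. -/
lemma exists_colSum_eq_min (ρ τ : Partition N) :
    ∃ σ : Partition N, ∀ m, colSum σ m = min (colSum ρ m) (colSum τ m) := by
  set E : ℕ → ℕ := fun m => min (colSum ρ m) (colSum τ m) with hE
  have hEmono : Monotone E := fun _ _ h => min_le_min (colSum_mono ρ h) (colSum_mono τ h)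
  have htel : ∀ m, ∑ j ∈ range m, (E (j + 1) - E j) = E m := fun m => by
    rw [sum_range_tsub hEmono]
    simp [hE, colSum]
  -- `E` is the minimum of two concave functions, hence concave.
  have hanti : Antitone fun j => E (j + 1) - E j := antitone_nat_of_succ_le fun j => by
    have := colSum_succ ρ j
    have := colSum_succ τ j
    have := colSum_succ ρ (j + 1)
    have := colSum_succ τ (j + 1)
    have := colLen_antitone ρ (by omega : j ≤ j + 1)
    have := colLen_antitone τ (by omega : j ≤ j + 1)
    simp only [hE]
    omega
  have hEN : ∀ m, N ≤ m → E m = N := fun m hm => by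
    simp [hE, colSum_of_partOne_le ρ ((partOne_le ρ).trans hm),
      colSum_of_partOne_le τ ((partOne_le τ).trans hm)]
  obtain ⟨σ, hσ⟩ := exists_colLen_eq hanti (B := N)
    (fun j hj => by simp [hEN j hj, hEN (j + 1) (by omega)]) ((htel N).trans (hEN N le_rfl))
  exact ⟨σ, fun m => by rw [colSum, hσ, htel]⟩

end Partitions

section Strips

open Finset

variable {M N : ℕ}

/-- `ρ / μ` is a horizontal strip: `μ ⊆ ρ` with at most one cell of `ρ / μ` in each column. -/
def IsHorizontalStrip (mu : Partition M) (ρ : Partition N) : Prop :=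
  ∀ j, colLen mu j ≤ colLen ρ j ∧ colLen ρ j ≤ colLen mu j + 1

lemma IsHorizontalStrip.colSum_le {mu : Partition M} {ρ : Partition N}
    (h : IsHorizontalStrip mu ρ) (m : ℕ) : colSum mu m ≤ colSum ρ m :=
  sum_le_sum fun j _ => (h j).1

lemma IsHorizontalStrip.of_colSum_eq_min {mu : Partition M} {ρ τ σ : Partition N}
    (hρ : IsHorizontalStrip mu ρ) (hτ : IsHorizontalStrip mu τ)
    (hσ : ∀ m, colSum σ m = min (colSum ρ m) (colSum τ m)) : IsHorizontalStrip mu σ := fun j => by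
  have := colSum_succ σ j
  have := colSum_succ ρ j
  have := colSum_succ τ j
  have := hσ j
  have := hσ (j + 1)
  have := hρ j
  have := hτ j
  omega

/-- The number of cells of `μ` lying above a cell of the strip `ρ / μ`, counted row by row:
row `i` of `μ` lies above the strip cells in its first `μᵢ` columns. -/
def stripWeight (mu : Partition M) (ρ : Partition N) : ℕ :=
  ∑ i ∈ range mu.parts.length, (colSum ρ (mu.parts.getD i 0) - colSum mu (mu.parts.getD i 0))

lemma colLen_eq_of_colSum_ne {mu : Partition M} {ρ τ : Partition N}
    (hrows : ∀ i < mu.parts.length,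
      colSum ρ (mu.parts.getD i 0) = colSum τ (mu.parts.getD i 0))
    {a b : ℕ} (hne : ∀ m, a < m → m ≤ b → colSum ρ m ≠ colSum τ m) :
    ∀ j, a ≤ j → j ≤ b → colLen mu j = colLen mu a := by
  intro j haj
  induction j, haj using Nat.le_induction with
  | base => exact fun _ => rfl
  | succ j haj ih =>
    intro hjb
    rw [← ih (by omega)]
    refine le_antisymm (colLen_antitone mu (by omega)) (not_lt.1 fun hlt => ?_)
    have hrow := hrows _ (hlt.trans_le (colLen_le_length mu j))
    rw [getD_colLen_succ_of_lt mu hlt] at hrow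
    exact hne (j + 1) (by omega) hjb hrow

lemma colLen_le_of_colSum_eq {mu : Partition M} {ρ τ : Partition N}
    (hρ : IsHorizontalStrip mu ρ) (hτ : IsHorizontalStrip mu τ)
    (hle : ∀ m, colSum ρ m ≤ colSum τ m)
    (hrows : ∀ i < mu.parts.length,
      colSum ρ (mu.parts.getD i 0) = colSum τ (mu.parts.getD i 0))
    {j₀ : ℕ} (hj₀ : colSum ρ j₀ = colSum τ j₀) : colLen τ j₀ ≤ colLen ρ j₀ := by
  by_contra! hlt
  -- Let `k + 1 > j₀` be the next place where the column sums agree. Then `ρ / μ` has a cell in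
  -- column `k` but not in column `j₀`, while `μ` has constant column lengths on `[j₀, k]`;
  -- this contradicts `colLen ρ` being antitone.
  have hρj₀ : colLen ρ j₀ = colLen mu j₀ := by
    have := hρ j₀
    have := hτ j₀
    omega
  have hagree : ∃ m, j₀ < m ∧ colSum ρ m = colSum τ m :=
    ⟨N + j₀ + 1, by omega, by
      rw [colSum_of_partOne_le ρ (by have := partOne_le ρ; omega),
        colSum_of_partOne_le τ (by have := partOne_le τ; omega)]⟩
  obtain ⟨j₁, ⟨hj₀j₁, hj₁⟩, hne⟩ : ∃ j₁, (j₀ < j₁ ∧ colSum ρ j₁ = colSum τ j₁) ∧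
      ∀ m, j₀ < m → m < j₁ → colSum ρ m ≠ colSum τ m :=
    ⟨Nat.find hagree, Nat.find_spec hagree, fun m h₀ h₁ h => Nat.find_min hagree h₁ ⟨h₀, h⟩⟩
  obtain ⟨k, rfl⟩ : ∃ k, j₁ = k + 1 := ⟨j₁ - 1, by omega⟩
  have hj₀k : j₀ < k := by
    by_contra! h
    obtain rfl : k = j₀ := by omega
    have := colSum_succ ρ k
    have := colSum_succ τ k
    omega
  have hρk : colLen ρ k = colLen mu k + 1 := by
    have := hne k hj₀k (by omega)
    have := hle k
    have := colSum_succ ρ k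
    have := colSum_succ τ k
    have := hρ k
    have := hτ k
    omega
  have hmu := colLen_eq_of_colSum_ne hrows (fun m h₀ h₁ => hne m h₀ (by omega)) k hj₀k.le le_rfl
  have := colLen_antitone ρ hj₀k.le
  omega

lemma eq_of_colSum_le_of_colSum_eq_rows {mu : Partition M} {ρ τ : Partition N}
    (hρ : IsHorizontalStrip mu ρ) (hτ : IsHorizontalStrip mu τ)
    (hle : ∀ m, colSum ρ m ≤ colSum τ m)
    (hrows : ∀ i < mu.parts.length,
      colSum ρ (mu.parts.getD i 0) = colSum τ (mu.parts.getD i 0)) : ρ = τ := by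
  refine Partition.ext_colLen (funext fun j => ?_)
  induction j using Nat.strong_induction_on with
  | _ j ih =>
    have hj : colSum ρ j = colSum τ j := sum_congr rfl fun i hi => ih i (mem_range.1 hi)
    have := hle (j + 1)
    rw [colSum_succ, colSum_succ] at this
    exact le_antisymm (by omega) (colLen_le_of_colSum_eq hρ hτ hle hrows hj)

lemma stripWeight_lt_of_domLE {mu : Partition M} {ρ τ : Partition N}
    (hρ : IsHorizontalStrip mu ρ) (hτ : IsHorizontalStrip mu τ) (hdom : domLE ρ τ)
    (hne : ρ ≠ τ) : stripWeight mu τ < stripWeight mu ρ := by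
  have hle := (domLE_iff_colSum_le ρ τ).1 hdom
  have hterm : ∀ i ∈ range mu.parts.length,
      colSum τ (mu.parts.getD i 0) - colSum mu (mu.parts.getD i 0)
        ≤ colSum ρ (mu.parts.getD i 0) - colSum mu (mu.parts.getD i 0) :=
    fun i _ => Nat.sub_le_sub_right (hle _) _
  refine lt_of_le_of_ne (sum_le_sum hterm) fun heq => hne ?_
  refine (eq_of_colSum_le_of_colSum_eq_rows hτ hρ hle fun i hi => ?_).symm
  have := (sum_eq_sum_iff_of_le hterm).1 heq i (mem_range.2 hi)
  have := hτ.colSum_le (mu.parts.getD i 0)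
  have := hle (mu.parts.getD i 0)
  omega

/-- The set `⟨μ⟩^l ∩ F` of the paper, with membership in `⟨μ⟩^l` expressed as a strip condition. -/
def stripsBelow (mu : Partition M) (l : ℕ) (lam : Partition N) : Set (Partition N) :=
  {ρ | IsHorizontalStrip mu ρ ∧ l ≤ partOne ρ ∧ domLE ρ lam}

/-- A minimiser `ρ` of the weight is the dominance-greatest element: the join of `ρ` with any
other element stays in the set and has weight at most that of `ρ`, hence equals `ρ`. -/
theorem exists_stripWeight_lt (mu : Partition M) (l : ℕ) (lam : Partition N)
    (hS : (stripsBelow mu l lam).Nonempty) :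
    ∃ ρ ∈ stripsBelow mu l lam, ∀ τ ∈ stripsBelow mu l lam, τ ≠ ρ →
      stripWeight mu ρ < stripWeight mu τ := by
  obtain ⟨ρ, hρ, hmin⟩ := (InvImage.wf (stripWeight mu) wellFounded_lt).has_min _ hS
  refine ⟨ρ, hρ, fun τ hτ hτρ => ?_⟩
  obtain ⟨σ, hσ⟩ := exists_colSum_eq_min ρ τ
  have hρσ : domLE ρ σ :=
    (domLE_iff_colSum_le ρ σ).2 fun m => (hσ m).trans_le (min_le_left _ _)
  have hσS : σ ∈ stripsBelow mu l lam :=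
    ⟨hρ.1.of_colSum_eq_min hτ.1 hσ, hρ.2.1.trans (partOne_le_of_domLE hρσ),
      (domLE_iff_colSum_le σ lam).2 fun m => (hσ m).symm ▸
        le_min ((domLE_iff_colSum_le ρ lam).1 hρ.2.2 m) ((domLE_iff_colSum_le τ lam).1 hτ.2.2 m)⟩
  have hσρ : σ = ρ := by
    by_contra h
    exact hmin σ hσS (stripWeight_lt_of_domLE hρ.1 hσS.1 hρσ (Ne.symm h))
  refine stripWeight_lt_of_domLE hτ.1 hρ.1 ((domLE_iff_colSum_le τ ρ).2 fun m => ?_) hτρ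
  rw [← hσρ, hσ]
  exact min_le_right _ _

end Strips

section Tableaux

open Finset

variable {n M N : ℕ}

lemma mem_cells_iff (ρ : Partition N) (i j : ℕ) : (i, j) ∈ cells ρ ↔ i < colLen ρ j := by
  simp only [cells, mem_filter, mem_product, mem_range, ← lt_colLen_iff]
  refine ⟨And.right, fun h => ⟨⟨h.trans_le (colLen_le_length ρ j), ?_⟩, h⟩⟩
  exact ((lt_colLen_iff ρ i j).1 h).trans_le (getD_le_partOne ρ i)

lemma card_filter_cells (ρ : Partition N) (p : ℕ → Prop) [DecidablePred p] :
    ((cells ρ).filter fun c => p c.2).card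
      = ∑ i ∈ range ρ.parts.length, ((range (ρ.parts.getD i 0)).filter p).card := by
  rw [cells, filter_filter, card_filter, sum_product]
  refine sum_congr rfl fun i _ => ?_
  rw [← card_filter]
  congr 1
  ext j
  simp only [mem_filter, mem_range]
  exact ⟨fun h => ⟨h.2.1, h.2.2⟩, fun h => ⟨h.1.trans_le (getD_le_partOne ρ i), h⟩⟩

lemma card_cells (ρ : Partition N) : (cells ρ).card = N := by
  have := card_filter_cells ρ fun _ => True
  simp only [filter_true, card_range] at this
  rw [this, sum_getD ρ le_rfl]

lemma count_colList (ρ : Partition N) (T : ℕ × ℕ → Fin n) (j : ℕ) (x : Fin n) :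
    (colList ρ T j).count x = ((range (colLen ρ j)).filter fun i => T (i, j) = x).card := by
  rw [colList, ← Multiset.coe_count, ← Multiset.map_coe, Multiset.count_map, card_def,
    filter_val]
  simp only [eq_comm]
  rfl

lemma IsHorizontalStrip.of_hasShapeRemoved {l : ℕ} {sp : Fin n} {mu : Partition M}
    {ρ : Partition N} {T : ℕ × ℕ → Fin n} (hfill : IsFilling l sp ρ T)
    (hshape : HasShapeRemoved ρ sp T mu) : IsHorizontalStrip mu ρ := fun j => by
  have := hshape j
  have := hfill.2 j
  omega

lemma IsHorizontalStrip.card_filter_eq_succ {mu : Partition M} {ρ : Partition N}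
    (h : IsHorizontalStrip mu ρ) (m : ℕ) :
    ((range m).filter fun j => colLen ρ j = colLen mu j + 1).card = colSum ρ m - colSum mu m := by
  rw [card_filter, colSum, colSum, ← sum_tsub_distrib _ fun j _ => (h j).1]
  exact sum_congr rfl fun j _ => by have := h j; split_ifs <;> omega

lemma le_finLast [NeZero n] (x : Fin n) : x ≤ finLast n :=
  Fin.le_def.2 (by simp only [finLast]; omega)

lemma eq_finLast_iff [NeZero n] {l : ℕ} {mu : Partition M} {ρ : Partition N}
    {T : ℕ × ℕ → Fin n} (hfill : IsFilling l (finLast n) ρ T) (hstd : IsStandard ρ T)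
    (hshape : HasShapeRemoved ρ (finLast n) T mu) {i j : ℕ} (hi : i < colLen ρ j) :
    T (i, j) = finLast n ↔ i = colLen mu j ∧ colLen ρ j = colLen mu j + 1 := by
  have hcount := hshape j
  have hle := hfill.2 j
  have hbottom : ∀ i < colLen ρ j, T (i, j) = finLast n → i + 1 = colLen ρ j := by
    intro i hi hT
    by_contra h
    have := hstd.1 i j ((mem_cells_iff ρ (i + 1) j).2 (by omega))
    exact absurd (le_finLast (T (i + 1, j))) (not_le.2 (hT ▸ this))
  have hfwd : ∀ i < colLen ρ j, T (i, j) = finLast n →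
      i = colLen mu j ∧ colLen ρ j = colLen mu j + 1 := by
    intro i hi hT
    have := hbottom i hi hT
    have : 0 < (colList ρ T j).count (finLast n) :=
      List.count_pos_iff.2 (List.mem_map.2 ⟨i, List.mem_range.2 hi, hT⟩)
    omega
  refine ⟨hfwd i hi, fun ⟨hi_eq, hlen⟩ => ?_⟩
  have hpos : 0 < (colList ρ T j).count (finLast n) := by omega
  obtain ⟨i', hi', hT⟩ := List.mem_map.1 (List.count_pos_iff.1 hpos)
  rwa [hi_eq, ← (hfwd i' (List.mem_range.1 hi') hT).1]

lemma wval_eq_stripWeight [NeZero n] {l : ℕ} {mu : Partition M} {ρ : Partition N}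
    {T : ℕ × ℕ → Fin n} (hfill : IsFilling l (finLast n) ρ T) (hstd : IsStandard ρ T)
    (hshape : HasShapeRemoved ρ (finLast n) T mu) : wval ρ (finLast n) T = stripWeight mu ρ := by
  have hset : ((cells ρ).filter fun c =>
        ∃ i' ∈ range (colLen ρ c.2), c.1 < i' ∧ T (i', c.2) = finLast n)
      = (cells mu).filter fun c => colLen ρ c.2 = colLen mu c.2 + 1 := by
    ext ⟨i, j⟩
    simp only [mem_filter, mem_cells_iff, mem_range]
    constructor
    · rintro ⟨-, i', hi', hii', hT⟩
      obtain ⟨rfl, hlen⟩ := (eq_finLast_iff hfill hstd hshape hi').1 hT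
      exact ⟨hii', hlen⟩
    · rintro ⟨hi, hlen⟩
      exact ⟨by omega, colLen mu j, by omega, hi,
        (eq_finLast_iff hfill hstd hshape (by omega)).2 ⟨rfl, hlen⟩⟩
  rw [wval, hset, card_filter_cells mu fun j => colLen ρ j = colLen mu j + 1, stripWeight]
  exact sum_congr rfl fun i _ =>
    (IsHorizontalStrip.of_hasShapeRemoved hfill hshape).card_filter_eq_succ _

lemma colSum_add_lt_colSum {mu : Partition N} {i j j' : ℕ} (hi : i < colLen mu j) (hjj' : j < j')
    (i' : ℕ) : colSum mu j + i < colSum mu j' + i' := by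
  have := colSum_succ mu j
  have := colSum_mono mu (show j + 1 ≤ j' from hjj')
  omega

lemma colSum_add_lt (mu : Partition N) {i j : ℕ} (hi : i < colLen mu j) : colSum mu j + i < N :=
  (colSum_add_lt_colSum hi (Nat.lt_succ_self j) 0).trans_le (colSum_le mu _)

lemma colSum_add_injOn (mu : Partition N) :
    Set.InjOn (fun c : ℕ × ℕ => colSum mu c.2 + c.1) (cells mu) := by
  rintro ⟨i, j⟩ hij ⟨i', j'⟩ hij' heq
  simp only [mem_coe, mem_cells_iff] at hij hij' heq
  rcases lt_trichotomy j j' with h | rfl | h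
  · exact absurd heq (colSum_add_lt_colSum hij h i').ne
  · simp only [Prod.mk.injEq, and_true]
    omega
  · exact absurd heq (colSum_add_lt_colSum hij' h i).ne'

def columnFilling [NeZero n] (mu : Partition (n - 1)) (c : ℕ × ℕ) : Fin n :=
  if h : c.1 < colLen mu c.2 then ⟨colSum mu c.2 + c.1, by have := colSum_add_lt mu h; omega⟩
  else finLast n

lemma val_columnFilling [NeZero n] {mu : Partition (n - 1)} {i j : ℕ} (h : i < colLen mu j) :
    (columnFilling mu (i, j) : ℕ) = colSum mu j + i := by
  simp [columnFilling, h]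

lemma columnFilling_eq_finLast_iff [NeZero n] {mu : Partition (n - 1)} {i j : ℕ} :
    columnFilling mu (i, j) = finLast n ↔ colLen mu j ≤ i := by
  by_cases h : i < colLen mu j
  · have := colSum_add_lt mu h
    simp only [Fin.ext_iff, val_columnFilling h, finLast]
    omega
  · exact iff_of_true (dif_neg h) (not_lt.1 h)

lemma map_val_eq_fillContent {α : Type*} {l : ℕ} (hl : 0 < l) {sp : Fin n} {T : α → Fin n}
    {A S : Finset α} (hAS : A ⊆ S) (hinj : Set.InjOn T A) (hA : ∀ a ∈ A, T a ≠ sp)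
    (hcardA : A.card = n - 1) (hS : ∀ a ∈ S, a ∉ A → T a = sp) (hcardS : S.card = n + l - 1) :
    S.val.map T = fillContent n l sp := by
  classical
  have hn := sp.pos
  have himage : A.image T = univ.erase sp := by
    refine eq_of_subset_of_card_le (fun x hx => ?_) ?_
    · obtain ⟨a, ha, rfl⟩ := mem_image.1 hx
      exact mem_erase.2 ⟨hA a ha, mem_univ _⟩
    · rw [card_image_of_injOn hinj, card_erase_of_mem (mem_univ _), card_univ, Fintype.card_fin,
        hcardA]
  have hrest : (S \ A).val.map T = Multiset.replicate l sp := by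
    refine Multiset.eq_replicate.2 ⟨?_, fun b hb => ?_⟩
    · rw [Multiset.card_map, card_val, card_sdiff_of_subset hAS]
      omega
    · obtain ⟨a, ha, rfl⟩ := Multiset.mem_map.1 hb
      exact hS a (mem_sdiff.1 ha).1 (mem_sdiff.1 ha).2
  have hsplit : S.val = (S \ A).val + A.val := by
    rw [sdiff_val, Multiset.sub_add_cancel (val_le_iff.2 hAS)]
  have huniv : (univ : Finset (Fin n)).val = sp ::ₘ (univ.erase sp).val := by
    rw [erase_val, Multiset.cons_erase (mem_univ_val sp)]
  have hrep : Multiset.replicate l sp = sp ::ₘ Multiset.replicate (l - 1) sp := by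
    rw [← Multiset.replicate_succ, Nat.sub_add_cancel hl]
  rw [hsplit, Multiset.map_add, hrest, ← image_val_of_injOn hinj, himage, fillContent, huniv,
    hrep, Multiset.cons_add, Multiset.add_cons]

lemma columnFilling_injOn [NeZero n] (mu : Partition (n - 1)) :
    Set.InjOn (columnFilling mu) (cells mu) := fun a ha b hb hab => by
  refine colSum_add_injOn mu ha hb ?_
  have := congrArg Fin.val hab
  rwa [val_columnFilling ((mem_cells_iff mu a.1 a.2).1 ha),
    val_columnFilling ((mem_cells_iff mu b.1 b.2).1 hb)] at this

section ColumnFilling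

variable [NeZero n] {l : ℕ} {mu : Partition (n - 1)} {ρ : Partition (n + l - 1)}

lemma hasShapeRemoved_columnFilling (hstrip : IsHorizontalStrip mu ρ) :
    HasShapeRemoved ρ (finLast n) (columnFilling mu) mu := fun j => by
  have hfilter : ((range (colLen ρ j)).filter fun i => columnFilling mu (i, j) = finLast n)
      = Ico (colLen mu j) (colLen ρ j) := by
    ext i
    simp only [mem_filter, mem_range, mem_Ico, columnFilling_eq_finLast_iff]
    omega
  rw [count_colList, hfilter, Nat.card_Ico]
  have := hstrip j
  omega

lemma isStandard_columnFilling (hstrip : IsHorizontalStrip mu ρ) :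
    IsStandard ρ (columnFilling mu) := by
  constructor
  · intro i j hij
    rw [mem_cells_iff] at hij
    have hi : i < colLen mu j := by have := hstrip j; omega
    by_cases hi' : i + 1 < colLen mu j
    · simp only [Fin.lt_def, val_columnFilling hi, val_columnFilling hi']
      omega
    · rw [columnFilling_eq_finLast_iff.2 (not_lt.1 hi')]
      exact lt_of_le_of_ne (le_finLast _) (mt columnFilling_eq_finLast_iff.1 (not_le.2 hi))
  · intro i j _
    by_cases hi : i < colLen mu (j + 1)
    · have hi' := hi.trans_le (colLen_antitone mu (by omega : j ≤ j + 1))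
      simp only [Fin.le_def, val_columnFilling hi, val_columnFilling hi']
      have := colSum_mono mu (by omega : j ≤ j + 1)
      omega
    · rw [columnFilling_eq_finLast_iff.2 (not_lt.1 hi)]
      exact le_finLast _

lemma isFilling_columnFilling (hl : 0 < l) (hstrip : IsHorizontalStrip mu ρ) :
    IsFilling l (finLast n) ρ (columnFilling mu) := by
  refine ⟨map_val_eq_fillContent hl (A := cells mu) (fun ⟨i, j⟩ h => ?_) (columnFilling_injOn mu)
    (fun ⟨i, j⟩ h => ?_) (card_cells mu) (fun ⟨i, j⟩ _ h => ?_) (card_cells ρ), fun j => ?_⟩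
  · rw [mem_cells_iff] at h ⊢
    exact h.trans_le (hstrip j).1
  · exact mt columnFilling_eq_finLast_iff.1 (not_le.2 ((mem_cells_iff mu i j).1 h))
  · exact columnFilling_eq_finLast_iff.2 (not_lt.1 (mt (mem_cells_iff mu i j).2 h))
  · have := hasShapeRemoved_columnFilling hstrip j
    have := hstrip j
    omega

end ColumnFilling

end Tableaux

theorem statement9_general (n l : ℕ) [NeZero n] (hl : 0 < l)
    (lam : Partition (n + l - 1))
    (mu : Partition (n - 1))
    (hX : ∃ rho : Partition (n + l - 1), (l ≤ partOne rho ∧ domLE rho lam) ∧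
        ∃ T, IsFilling l (finLast n) rho T ∧ IsStandard rho T ∧
          HasShapeRemoved rho (finLast n) T mu) :
    ∃ tlam : Partition (n + l - 1),
      ((l ≤ partOne tlam ∧ domLE tlam lam) ∧
        ∃ T, IsFilling l (finLast n) tlam T ∧ IsStandard tlam T ∧
          HasShapeRemoved tlam (finLast n) T mu) ∧
      ∀ T, IsFilling l (finLast n) tlam T → IsStandard tlam T →
        HasShapeRemoved tlam (finLast n) T mu →
      ∀ rho : Partition (n + l - 1), (l ≤ partOne rho ∧ domLE rho lam) → rho ≠ tlam →
      ∀ T', IsFilling l (finLast n) rho T' → IsStandard rho T' →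
        HasShapeRemoved rho (finLast n) T' mu →
        wval tlam (finLast n) T < wval rho (finLast n) T' := by
  obtain ⟨ρ₀, ⟨hρ₀l, hρ₀lam⟩, T₀, hT₀fill, -, hT₀shape⟩ := hX
  obtain ⟨ρ, ⟨hρstrip, hρl, hρlam⟩, hρmin⟩ := exists_stripWeight_lt mu l lam
    ⟨ρ₀, IsHorizontalStrip.of_hasShapeRemoved hT₀fill hT₀shape, hρ₀l, hρ₀lam⟩
  refine ⟨ρ, ⟨⟨hρl, hρlam⟩, columnFilling mu, isFilling_columnFilling hl hρstrip,
      isStandard_columnFilling hρstrip, hasShapeRemoved_columnFilling hρstrip⟩,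
    fun T hfill hstd hshape τ hτ hτρ T' hfill' hstd' hshape' => ?_⟩
  rw [wval_eq_stripWeight hfill hstd hshape, wval_eq_stripWeight hfill' hstd' hshape']
  exact hρmin τ ⟨IsHorizontalStrip.of_hasShapeRemoved hfill' hshape', hτ⟩ hτρ

/-- Lemma `maximum element`. For the lower filter F = {ρ ⊴ λ} and
μ ∈ P_{n-1}, if X = ⟨μ⟩^l ∩ F is nonempty then it has a unique strict minimizer of w_μ. -/
theorem statement9 (n l : ℕ) [NeZero n] (hl : 0 < l)
    (lam : Partition (n + l - 1)) (hlam : l ≤ partOne lam)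
    (mu : Partition (n - 1))
    (hX : ∃ rho : Partition (n + l - 1), (l ≤ partOne rho ∧ domLE rho lam) ∧
        ∃ T, IsFilling l (finLast n) rho T ∧ IsStandard rho T ∧
          HasShapeRemoved rho (finLast n) T mu) :
    ∃ tlam : Partition (n + l - 1),
      ((l ≤ partOne tlam ∧ domLE tlam lam) ∧
        ∃ T, IsFilling l (finLast n) tlam T ∧ IsStandard tlam T ∧
          HasShapeRemoved tlam (finLast n) T mu) ∧
      ∀ T, IsFilling l (finLast n) tlam T → IsStandard tlam T →
        HasShapeRemoved tlam (finLast n) T mu →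
      ∀ rho : Partition (n + l - 1), (l ≤ partOne rho ∧ domLE rho lam) → rho ≠ tlam →
      ∀ T', IsFilling l (finLast n) rho T' → IsStandard rho T' →
        HasShapeRemoved rho (finLast n) T' mu →
        wval tlam (finLast n) T < wval rho (finLast n) T' :=
  statement9_general n l hl lam mu hX

end SpechtLL
end

section
/- Let I ⊆ S = K[x_1,…,x_n] be a graded ideal and G ⊆ I a Gröbner basis of I with respect to the lexicographic order with x_1 < x_2 < … < x_n. If every element of G is a product of linear forms, then G is a Gröbner basis of I with respect to every monomial order ≺ satisfying x_1 ≺ x_2 ≺ … ≺ x_n. -/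
open MvPolynomial

namespace SpechtLL

variable (K : Type*) [Field K]

/-!
For a linear form, lex and `≺` both pick as initial monomial the variable of largest index, and
initial monomials are multiplicative; so every element of `G` has the same initial monomial for
both orders. A Gröbner basis for one monomial order whose elements keep their initial monomials
under a second monomial order is a Gröbner basis for the second order as well.
-/

theorem _root_.MvPolynomial.IsHomogeneous.exists_eq_single_of_mem_support {σ R : Type*}
    [CommSemiring R] {p : MvPolynomial σ R} (hp : p.IsHomogeneous 1) {d : σ →₀ ℕ}
    (hd : d ∈ p.support) : ∃ i, d = Finsupp.single i 1 := by
  have hdeg : d.degree = 1 := by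
    rw [Finsupp.degree_eq_weight_one]
    exact hp (mem_support_iff.mp hd)
  exact (Finsupp.sum_eq_one_iff d).mp hdeg

section MonomialOrder

variable {n : ℕ} {r : (Fin n →₀ ℕ) → (Fin n →₀ ℕ) → Prop}

theorem IsMonomialOrder.asymm (hr : IsMonomialOrder r) {a b : Fin n →₀ ℕ} (hab : r a b) :
    ¬ r b a :=
  fun hba => hr.2.1 a (hr.1 a b a hab hba)

theorem IsMonomialOrder.add_left (hr : IsMonomialOrder r) {a b : Fin n →₀ ℕ} (c : Fin n →₀ ℕ)
    (hab : r a b) : r (c + a) (c + b) := by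
  simpa only [add_comm c] using hr.2.2.2.1 a b c hab

theorem IsMonomialOrder.eq_or_lt_of_le (hr : IsMonomialOrder r) {a b : Fin n →₀ ℕ}
    (hab : a ≤ b) : a = b ∨ r a b := by
  obtain ⟨c, rfl⟩ := exists_add_of_le hab
  rcases eq_or_ne c 0 with rfl | hc
  · exact Or.inl (add_zero a).symm
  · simpa using Or.inr (hr.add_left a (hr.2.2.2.2 c hc))

/-- Dickson's lemma: any sequence of exponent vectors has a term dividing a later one. -/
theorem IsMonomialOrder.wellFounded (hr : IsMonomialOrder r) : WellFounded r := by
  have : IsStrictOrder (Fin n →₀ ℕ) r := { irrefl := hr.2.1, trans := hr.1 }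
  rw [RelEmbedding.wellFounded_iff_isEmpty]
  refine ⟨fun emb => ?_⟩
  obtain ⟨i, j, hij, hle⟩ := wellQuasiOrdered_le (α := Fin n →₀ ℕ) (fun k => emb k)
  have hdesc : r (emb j) (emb i) := emb.map_rel_iff.mpr hij
  rcases hr.eq_or_lt_of_le hle with heq | hlt
  · exact hr.2.1 _ (heq ▸ hdesc)
  · exact hr.asymm hlt hdesc

theorem lexLt_iff_toColex_lt {a b : Fin n →₀ ℕ} : lexLt a b ↔ toColex a < toColex b := by
  rw [Finsupp.Colex.lt_iff]
  exact exists_congr fun _ => and_comm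

theorem isMonomialOrder_lexLt : IsMonomialOrder (lexLt (n := n)) := by
  simp only [IsMonomialOrder, lexLt_iff_toColex_lt]
  refine ⟨fun _ _ _ => lt_trans, fun _ => lt_irrefl _, fun a b => ?_, fun _ _ c h => ?_,
    fun a ha => ?_⟩
  · rcases lt_trichotomy (toColex a) (toColex b) with h | h | h
    · exact Or.inr (Or.inl h)
    · exact Or.inl (toColex.injective h)
    · exact Or.inr (Or.inr h)
  · exact add_lt_add_of_lt_of_le h le_rfl
  · exact bot_lt_iff_ne_bot.mpr (toColex.injective.ne ha)

theorem lexLt_single_of_lt {i j : Fin n} (hij : i < j) :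
    lexLt (Finsupp.single i 1) (Finsupp.single j 1) :=
  lexLt_iff_toColex_lt.mpr (Finsupp.Colex.single_lt_iff.mpr hij)

end MonomialOrder

section InitialMonomial

variable {K} {n : ℕ} {r : (Fin n →₀ ℕ) → (Fin n →₀ ℕ) → Prop}

theorem IsMonomialOrder.exists_isInitialFor (hr : IsMonomialOrder r)
    {f : MvPolynomial (Fin n) K} (hf : f ≠ 0) : ∃ d, IsInitialFor K r f d := by
  classical
  have : IsStrictTotalOrder (Fin n →₀ ℕ) r :=
    { irrefl := hr.2.1, trans := hr.1
      trichotomous := fun a b hab hba => by rcases hr.2.2.1 a b with h | h | h <;> tauto }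
  obtain ⟨d, hd, hmax⟩ := @Finset.exists_max_image _ _ (linearOrderOfSTO r) f.support id
    (support_nonempty.mpr hf)
  exact ⟨d, hd, fun e he hne => (hmax e he).resolve_left hne⟩

theorem IsInitialFor.ne_zero {f : MvPolynomial (Fin n) K} {d : Fin n →₀ ℕ}
    (h : IsInitialFor K r f d) : f ≠ 0 := by
  rintro rfl
  exact absurd h.1 (by simp)

theorem IsInitialFor.eq_or_lt_of_mem_support {f : MvPolynomial (Fin n) K} {d t : Fin n →₀ ℕ}
    (h : IsInitialFor K r f d) (ht : t ∈ f.support) : t = d ∨ r t d := by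
  by_cases htd : t = d
  · exact Or.inl htd
  · exact Or.inr (h.2 t ht htd)

theorem IsInitialFor.unique (hr : IsMonomialOrder r) {f : MvPolynomial (Fin n) K}
    {d d' : Fin n →₀ ℕ} (h : IsInitialFor K r f d) (h' : IsInitialFor K r f d') : d = d' := by
  by_contra hne
  exact hr.asymm (h.2 d' h'.1 (Ne.symm hne)) (h'.2 d h.1 hne)

theorem isInitialFor_monomial {s : Fin n →₀ ℕ} {c : K} (hc : c ≠ 0) :
    IsInitialFor K r (monomial s c) s := by
  classical
  refine ⟨by simp [hc], fun e he hne => absurd he ?_⟩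
  simp [support_monomial, hc, hne]

theorem IsInitialFor.add_lt_add_of_mem_support (hr : IsMonomialOrder r)
    {f g : MvPolynomial (Fin n) K} {a b u v : Fin n →₀ ℕ} (hf : IsInitialFor K r f a)
    (hg : IsInitialFor K r g b) (hu : u ∈ f.support) (hv : v ∈ g.support)
    (hne : (u, v) ≠ (a, b)) : r (u + v) (a + b) := by
  rcases hf.eq_or_lt_of_mem_support hu with rfl | hua
  · exact hr.add_left u (hg.2 v hv fun hvb => hne (by rw [hvb]))
  · have h₁ : r (u + v) (a + v) := hr.2.2.2.1 u a v hua
    rcases hg.eq_or_lt_of_mem_support hv with rfl | hvb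
    · exact h₁
    · exact hr.1 _ _ _ h₁ (hr.add_left a hvb)

theorem IsInitialFor.mul (hr : IsMonomialOrder r) {f g : MvPolynomial (Fin n) K}
    {a b : Fin n →₀ ℕ} (hf : IsInitialFor K r f a) (hg : IsInitialFor K r g b) :
    IsInitialFor K r (f * g) (a + b) := by
  classical
  have hcoeff : coeff (a + b) (f * g) = coeff a f * coeff b g := by
    rw [coeff_mul]
    refine Finset.sum_eq_single_of_mem (a, b)
      (Finset.HasAntidiagonal.mem_antidiagonal.mpr rfl) ?_
    rintro ⟨u, v⟩ huv hne
    by_cases hu : u ∈ f.support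
    · by_cases hv : v ∈ g.support
      · have := hf.add_lt_add_of_mem_support hr hg hu hv hne
        rw [Finset.HasAntidiagonal.mem_antidiagonal.mp huv] at this
        exact absurd this (hr.2.1 _)
      · rw [notMem_support_iff.mp hv, mul_zero]
    · rw [notMem_support_iff.mp hu, zero_mul]
  refine ⟨?_, fun t ht htab => ?_⟩
  · rw [mem_support_iff, hcoeff]
    exact mul_ne_zero (mem_support_iff.mp hf.1) (mem_support_iff.mp hg.1)
  · obtain ⟨u, hu, v, hv, rfl⟩ := Finset.mem_add.mp (support_mul f g ht)
    exact hf.add_lt_add_of_mem_support hr hg hu hv fun h => htab (by simp_all)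

theorem IsInitialFor.smul_sub_smul (hr : IsMonomialOrder r) {f q : MvPolynomial (Fin n) K}
    {d d' : Fin n →₀ ℕ} (hf : IsInitialFor K r f d) (hq : IsInitialFor K r q d')
    (hd : r d' d) {a : K} (ha : a ≠ 0) (b : K) : IsInitialFor K r (a • f - b • q) d := by
  classical
  refine ⟨?_, fun t ht htd => ?_⟩
  · have hqd : coeff d q = 0 := notMem_support_iff.mp fun hmem =>
      (hq.eq_or_lt_of_mem_support hmem).elim (fun h => hr.2.1 d (h ▸ hd)) (hr.asymm hd)
    rw [mem_support_iff, coeff_sub, coeff_smul, coeff_smul, hqd, smul_zero, sub_zero,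
      smul_eq_mul]
    exact mul_ne_zero ha (mem_support_iff.mp hf.1)
  · rcases Finset.mem_union.mp (support_sub (Fin n) _ _ ht) with htf | htq
    · exact hf.2 t (support_smul htf) htd
    · rcases hq.eq_or_lt_of_mem_support (support_smul htq) with rfl | htd'
      · exact hd
      · exact hr.1 _ _ _ htd' hd

theorem IsInitialFor.lt_of_mem_support_smul_sub_smul {f q : MvPolynomial (Fin n) K}
    {d t : Fin n →₀ ℕ} (hf : IsInitialFor K r f d) (hq : IsInitialFor K r q d)
    (ht : t ∈ (coeff d q • f - coeff d f • q).support) : r t d := by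
  classical
  rcases Finset.mem_union.mp (support_sub (Fin n) _ _ ht) with htf | htq
  · rcases hf.eq_or_lt_of_mem_support (support_smul htf) with rfl | htd
    · simp [mul_comm] at ht
    · exact htd
  · rcases hq.eq_or_lt_of_mem_support (support_smul htq) with rfl | htd
    · simp [mul_comm] at ht
    · exact htd

theorem IsInitialFor.list_prod {r₁ r₂ : (Fin n →₀ ℕ) → (Fin n →₀ ℕ) → Prop}
    (hr₁ : IsMonomialOrder r₁) (hr₂ : IsMonomialOrder r₂) {L : List (MvPolynomial (Fin n) K)}
    (hL : ∀ p ∈ L, ∀ e, IsInitialFor K r₁ p e → IsInitialFor K r₂ p e) {e : Fin n →₀ ℕ}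
    (he : IsInitialFor K r₁ L.prod e) : IsInitialFor K r₂ L.prod e := by
  induction L generalizing e with
  | nil =>
    rw [List.prod_nil, ← C_1, ← monomial_zero'] at he ⊢
    rw [he.unique hr₁ (isInitialFor_monomial one_ne_zero)]
    exact isInitialFor_monomial one_ne_zero
  | cons p L ih =>
    rw [List.prod_cons] at he ⊢
    obtain ⟨a, ha⟩ := hr₁.exists_isInitialFor (left_ne_zero_of_mul he.ne_zero)
    obtain ⟨b, hb⟩ := hr₁.exists_isInitialFor (right_ne_zero_of_mul he.ne_zero)
    rw [he.unique hr₁ (ha.mul hr₁ hb)]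
    exact (hL p List.mem_cons_self a ha).mul hr₂
      (ih (fun q hq => hL q (List.mem_cons_of_mem p hq)) hb)

theorem IsInitialFor.of_lexLt_of_isHomogeneous {lt : (Fin n →₀ ℕ) → (Fin n →₀ ℕ) → Prop}
    (hvar : ∀ i j : Fin n, i < j → lt (Finsupp.single i 1) (Finsupp.single j 1))
    {p : MvPolynomial (Fin n) K} (hp : p.IsHomogeneous 1) {a : Fin n →₀ ℕ}
    (ha : IsInitialFor K lexLt p a) : IsInitialFor K lt p a := by
  refine ⟨ha.1, fun d hd hda => ?_⟩
  obtain ⟨i, rfl⟩ := hp.exists_eq_single_of_mem_support hd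
  obtain ⟨j, rfl⟩ := hp.exists_eq_single_of_mem_support ha.1
  rcases lt_or_gt_of_ne fun hij : i = j => hda (by rw [hij]) with hij | hji
  · exact hvar i j hij
  · exact absurd (lexLt_single_of_lt hji) (isMonomialOrder_lexLt.asymm (ha.2 _ hd hda))

end InitialMonomial

section GroebnerBasis

variable {K} {n : ℕ}

/-- The reduction `f ↦ c f - c' x^s g` cancels the `r₁`-initial term of `f` and keeps its
`r₂`-initial term, so well-founded induction on the `r₁`-initial monomial applies. -/
theorem IsGroebnerBasisFor.of_isInitialFor {r₁ r₂ : (Fin n →₀ ℕ) → (Fin n →₀ ℕ) → Prop}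
    (hr₁ : IsMonomialOrder r₁) (hr₂ : IsMonomialOrder r₂) {G : Set (MvPolynomial (Fin n) K)}
    {I : Ideal (MvPolynomial (Fin n) K)} (hG : IsGroebnerBasisFor K r₁ G I)
    (hinit : ∀ g ∈ G, ∀ e, IsInitialFor K r₁ g e → IsInitialFor K r₂ g e) :
    IsGroebnerBasisFor K r₂ G I := by
  refine ⟨hG.1, fun f hfI hf0 d hd => ?_⟩
  obtain ⟨d₀, hd₀⟩ := hr₁.exists_isInitialFor hf0
  induction d₀ using hr₁.wellFounded.induction generalizing f with
  | _ d₀ ih =>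
  obtain ⟨g, hgG, e, hge, hed₀⟩ := hG.2 f hfI hf0 d₀ hd₀
  rcases eq_or_ne d₀ d with rfl | hne
  · exact ⟨g, hgG, e, hinit g hgG e hge, hed₀⟩
  set q := monomial (d₀ - e) (1 : K) * g
  have hq : ∀ r, IsMonomialOrder r → IsInitialFor K r g e → IsInitialFor K r q d₀ :=
    fun r hr hg => tsub_add_cancel_of_le hed₀ ▸ (isInitialFor_monomial one_ne_zero).mul hr hg
  have hq₁ := hq r₁ hr₁ hge
  have hq₂ := hq r₂ hr₂ (hinit g hgG e hge)
  set h := coeff d₀ q • f - coeff d₀ f • q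
  have hhI : h ∈ I := I.sub_mem (I.smul_of_tower_mem _ hfI)
    (I.smul_of_tower_mem _ (I.mul_mem_left _ (hG.1 g hgG)))
  have hh₂ : IsInitialFor K r₂ h d :=
    hd.smul_sub_smul hr₂ hq₂ (hd.2 d₀ hd₀.1 hne) (mem_support_iff.mp hq₂.1) _
  obtain ⟨d₁, hd₁⟩ := hr₁.exists_isInitialFor hh₂.ne_zero
  exact ih d₁ (hd₀.lt_of_mem_support_smul_sub_smul hq₁ hd₁.1) h hhI hh₂.ne_zero hh₂ hd₁

end GroebnerBasis

theorem statement13_general (K : Type*) [Field K] (n : ℕ)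
    (I : Ideal (MvPolynomial (Fin n) K))
    (G : Set (MvPolynomial (Fin n) K))
    (hGB : IsGroebnerBasisFor K lexLt G I)
    (hlin : ∀ g ∈ G, ∃ L : List (MvPolynomial (Fin n) K),
        (∀ p ∈ L, p.IsHomogeneous 1) ∧ g = L.prod)
    (lt : (Fin n →₀ ℕ) → (Fin n →₀ ℕ) → Prop)
    (hlt : IsMonomialOrder lt)
    (hvar : ∀ i j : Fin n, i < j → lt (Finsupp.single i 1) (Finsupp.single j 1)) :
    IsGroebnerBasisFor K lt G I := by
  refine hGB.of_isInitialFor isMonomialOrder_lexLt hlt fun g hg e he => ?_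
  obtain ⟨L, hL, rfl⟩ := hlin g hg
  exact he.list_prod isMonomialOrder_lexLt hlt fun p hp _ hpe =>
    hpe.of_lexLt_of_isHomogeneous hvar (hL p hp)

/-- Lemma `product of linear forms`. A Gröbner basis (w.r.t. lex with
x₁ < ⋯ < xₙ) of a graded ideal consisting of products of linear forms is a Gröbner basis
for every monomial order with x₁ ≺ x₂ ≺ ⋯ ≺ xₙ. -/
theorem statement13 (K : Type*) [Field K] (n : ℕ)
    (I : Ideal (MvPolynomial (Fin n) K))
    (hgraded : ∀ f ∈ I, ∀ k : ℕ, MvPolynomial.homogeneousComponent k f ∈ I)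
    (G : Set (MvPolynomial (Fin n) K))
    (hGB : IsGroebnerBasisFor K lexLt G I)
    (hlin : ∀ g ∈ G, ∃ L : List (MvPolynomial (Fin n) K),
        (∀ p ∈ L, p.IsHomogeneous 1) ∧ g = L.prod)
    (lt : (Fin n →₀ ℕ) → (Fin n →₀ ℕ) → Prop)
    (hlt : IsMonomialOrder lt)
    (hvar : ∀ i j : Fin n, i < j → lt (Finsupp.single i 1) (Finsupp.single j 1)) :
    IsGroebnerBasisFor K lt G I :=
  statement13_general K n I G hGB hlin lt hlt hvar

end SpechtLL
end
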